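/- arXiv:1203.0800 — 5 statements merged into one kernel-verified Lean document; each statement's English description precedes it below -/
import Mathlib

section
/- Let F_d be the free group on d ≥ 2 generators and let 1 ≤ q ≤ 2. If f, g : F_d → ℂ are finitely supported with supp(f) ⊆ W_k and supp(g) ⊆ W_ℓ, and m = k + ℓ, then the ℓ_q norm of the restriction of f*g to the sphere W_m satisfies |(f*g)·χ_m|_q ≤ |f|_q · |g|_q, where χ_m is the indicator function of W_m. -/
/-- Convolution of two functions on a group. -/
noncomputable def conv {G : Type*} [Group G] (f g : G → ℂ) : G → ℂ :=
  fun s => ∑' t, f t * g (t⁻¹ * s)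

/-- The `ℓ_q` norm of a function on a group. -/
noncomputable def lqNorm {G : Type*} (q : ℝ) (h : G → ℂ) : ℝ :=
  (∑' s, ‖h s‖ ^ q) ^ (1 / q)

/-- Uniqueness of factorizations realizing a length-additive product in a free group. -/
lemma freeGroup_factor_unique {α : Type*} [DecidableEq α] (t u t' u' : FreeGroup α)
    (h : t * u = t' * u') (ht : t.norm = t'.norm) (hu : u.norm = u'.norm)
    (hsum : (t * u).norm = t.norm + u.norm) : t = t' := by
  have hsum' : (t' * u').norm = t'.norm + u'.norm := by rw [← h, ← ht, ← hu]; exact hsum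
  have e1 : (t * u).toWord = t.toWord ++ u.toWord :=
    (FreeGroup.toWord_mul_sublist t u).eq_of_length
      (by simpa [FreeGroup.norm, List.length_append] using hsum)
  have e2 : (t' * u').toWord = t'.toWord ++ u'.toWord :=
    (FreeGroup.toWord_mul_sublist t' u').eq_of_length
      (by simpa [FreeGroup.norm, List.length_append] using hsum')
  have e3 : t.toWord ++ u.toWord = t'.toWord ++ u'.toWord := by rw [← e1, ← e2, h]
  exact FreeGroup.toWord_injective (List.append_inj e3 ht).1

/-- for `1 ≤ q ≤ 2`, `supp f ⊆ W_k`, `supp g ⊆ W_ℓ` and `m = k + ℓ`,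
one has `|(f*g)χ_m|_q ≤ |f|_q |g|_q`. -/
theorem conv_sphere_norm_top (d k l m : ℕ) (hd : 2 ≤ d) (q : ℝ)
    (hq1 : 1 ≤ q) (hq2 : q ≤ 2)
    (f g : FreeGroup (Fin d) → ℂ)
    (hf : (Function.support f).Finite) (hg : (Function.support g).Finite)
    (hfk : ∀ t, f t ≠ 0 → FreeGroup.norm t = k)
    (hgl : ∀ u, g u ≠ 0 → FreeGroup.norm u = l)
    (hm : m = k + l) :
    lqNorm q (fun s => if FreeGroup.norm s = m then conv f g s else 0) ≤
      lqNorm q f * lqNorm q g := by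
  classical
  have hq0 : 0 < q := lt_of_lt_of_le zero_lt_one hq1
  have hqne : q ≠ 0 := ne_of_gt hq0
  set h : FreeGroup (Fin d) → ℂ := fun s => if FreeGroup.norm s = m then conv f g s else 0
    with hh
  set Tf : Finset (FreeGroup (Fin d)) := hf.toFinset with hTf
  set Tg : Finset (FreeGroup (Fin d)) := hg.toFinset with hTg
  set S : Finset (FreeGroup (Fin d)) := (Tf ×ˢ Tg).image (fun p => p.1 * p.2) with hS
  -- off `S`, the convolution vanishes
  have hconv0 : ∀ s ∉ S, conv f g s = 0 := by
    intro s hs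
    have : ∀ t, f t * g (t⁻¹ * s) = 0 := by
      intro t
      by_contra hne
      have hft : f t ≠ 0 := fun h0 => hne (by simp [h0])
      have hgt : g (t⁻¹ * s) ≠ 0 := fun h0 => hne (by simp [h0])
      exact hs (Finset.mem_image.2 ⟨(t, t⁻¹ * s),
        Finset.mem_product.2 ⟨by simp [hTf, Function.mem_support, hft],
          by simp [hTg, Function.mem_support, hgt]⟩, by simp⟩)
    simp only [conv, this, tsum_zero]
  -- pointwise bound
  have pb : ∀ s, ‖h s‖ ^ q ≤ ∑ t ∈ Tf, ‖f t‖ ^ q * ‖g (t⁻¹ * s)‖ ^ q := by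
    intro s
    have hnn : ∀ t ∈ Tf, 0 ≤ ‖f t‖ ^ q * ‖g (t⁻¹ * s)‖ ^ q := fun t _ =>
      mul_nonneg (Real.rpow_nonneg (norm_nonneg _) q) (Real.rpow_nonneg (norm_nonneg _) q)
    by_cases hsm : FreeGroup.norm s = m
    · by_cases hex : ∃ t₀, f t₀ * g (t₀⁻¹ * s) ≠ 0
      · obtain ⟨t₀, ht₀⟩ := hex
        have hft₀ : f t₀ ≠ 0 := fun h0 => ht₀ (by simp [h0])
        have hgt₀ : g (t₀⁻¹ * s) ≠ 0 := fun h0 => ht₀ (by simp [h0])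
        -- uniqueness of the nonzero term
        have huniq : ∀ t, t ≠ t₀ → f t * g (t⁻¹ * s) = 0 := by
          intro t hne
          by_contra h0
          have hft : f t ≠ 0 := fun hz => h0 (by simp [hz])
          have hgt : g (t⁻¹ * s) ≠ 0 := fun hz => h0 (by simp [hz])
          apply hne
          have heq : t * (t⁻¹ * s) = t₀ * (t₀⁻¹ * s) := by group
          refine freeGroup_factor_unique t (t⁻¹ * s) t₀ (t₀⁻¹ * s) heq ?_ ?_ ?_
          · rw [hfk t hft, hfk t₀ hft₀]
          · rw [hgl _ hgt, hgl _ hgt₀]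
          · have : t * (t⁻¹ * s) = s := by group
            rw [this, hsm, hfk t hft, hgl _ hgt, hm]
        have hcs : conv f g s = f t₀ * g (t₀⁻¹ * s) := tsum_eq_single t₀ huniq
        have hhs : h s = f t₀ * g (t₀⁻¹ * s) := by simp [hh, hsm, hcs]
        have hmem : t₀ ∈ Tf := by simp [hTf, Function.mem_support, hft₀]
        calc ‖h s‖ ^ q = ‖f t₀‖ ^ q * ‖g (t₀⁻¹ * s)‖ ^ q := by
              rw [hhs, norm_mul, Real.mul_rpow (norm_nonneg _) (norm_nonneg _)]
          _ ≤ ∑ t ∈ Tf, ‖f t‖ ^ q * ‖g (t⁻¹ * s)‖ ^ q :=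
              Finset.single_le_sum hnn hmem
      · push_neg at hex
        have : conv f g s = 0 := by simp only [conv, hex, tsum_zero]
        have : h s = 0 := by simp [hh, hsm, this]
        rw [this]
        simpa [Real.zero_rpow hqne] using Finset.sum_nonneg hnn
    · have : h s = 0 := by simp [hh, hsm]
      rw [this]
      simpa [Real.zero_rpow hqne] using Finset.sum_nonneg hnn
  -- convert the three tsums to finite sums
  have hsumh : (∑' s, ‖h s‖ ^ q) = ∑ s ∈ S, ‖h s‖ ^ q := by
    refine tsum_eq_sum ?_
    intro s hs
    have : h s = 0 := by
      by_cases hsm : FreeGroup.norm s = m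
      · simp [hh, hsm, hconv0 s hs]
      · simp [hh, hsm]
    simp [this, Real.zero_rpow hqne]
  have hsumf : (∑' t, ‖f t‖ ^ q) = ∑ t ∈ Tf, ‖f t‖ ^ q := by
    refine tsum_eq_sum ?_
    intro t ht
    have : f t = 0 := by simpa [hTf, Function.mem_support] using ht
    simp [this, Real.zero_rpow hqne]
  have hsumg : (∑' u, ‖g u‖ ^ q) = ∑ u ∈ Tg, ‖g u‖ ^ q := by
    refine tsum_eq_sum ?_
    intro u hu
    have : g u = 0 := by simpa [hTg, Function.mem_support] using hu
    simp [this, Real.zero_rpow hqne]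
  -- inner sum bound
  have inner : ∀ t : FreeGroup (Fin d),
      (∑ s ∈ S, ‖g (t⁻¹ * s)‖ ^ q) ≤ ∑ u ∈ Tg, ‖g u‖ ^ q := by
    intro t
    have himg : (∑ s ∈ S, ‖g (t⁻¹ * s)‖ ^ q) = ∑ u ∈ S.image (fun s => t⁻¹ * s), ‖g u‖ ^ q :=
      (Finset.sum_image (f := fun u => ‖g u‖ ^ q) (g := fun s => t⁻¹ * s) (s := S)
        (fun a _ b _ hab => mul_left_cancel hab)).symm
    rw [himg]
    set U := S.image (fun s => t⁻¹ * s)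
    calc (∑ u ∈ U, ‖g u‖ ^ q) ≤ ∑ u ∈ U ∪ Tg, ‖g u‖ ^ q :=
          Finset.sum_le_sum_of_subset_of_nonneg Finset.subset_union_left
            (fun u _ _ => Real.rpow_nonneg (norm_nonneg _) q)
      _ = ∑ u ∈ Tg, ‖g u‖ ^ q := by
          refine (Finset.sum_subset Finset.subset_union_right ?_).symm
          intro u _ hu
          have : g u = 0 := by
            by_contra h0
            exact hu (by simp [hTg, Function.mem_support, h0])
          simp [this, Real.zero_rpow hqne]
  -- main estimate on the finite sums
  have main : (∑ s ∈ S, ‖h s‖ ^ q) ≤ (∑ t ∈ Tf, ‖f t‖ ^ q) * ∑ u ∈ Tg, ‖g u‖ ^ q := by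
    calc (∑ s ∈ S, ‖h s‖ ^ q)
        ≤ ∑ s ∈ S, ∑ t ∈ Tf, ‖f t‖ ^ q * ‖g (t⁻¹ * s)‖ ^ q :=
          Finset.sum_le_sum fun s _ => pb s
      _ = ∑ t ∈ Tf, ∑ s ∈ S, ‖f t‖ ^ q * ‖g (t⁻¹ * s)‖ ^ q := Finset.sum_comm
      _ = ∑ t ∈ Tf, ‖f t‖ ^ q * ∑ s ∈ S, ‖g (t⁻¹ * s)‖ ^ q := by
          simp [Finset.mul_sum]
      _ ≤ ∑ t ∈ Tf, ‖f t‖ ^ q * ∑ u ∈ Tg, ‖g u‖ ^ q :=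
          Finset.sum_le_sum fun t _ =>
            mul_le_mul_of_nonneg_left (inner t) (Real.rpow_nonneg (norm_nonneg _) q)
      _ = (∑ t ∈ Tf, ‖f t‖ ^ q) * ∑ u ∈ Tg, ‖g u‖ ^ q := by rw [← Finset.sum_mul]
  -- conclude
  have hFnn : 0 ≤ ∑ t ∈ Tf, ‖f t‖ ^ q :=
    Finset.sum_nonneg fun t _ => Real.rpow_nonneg (norm_nonneg _) q
  have hGnn : 0 ≤ ∑ u ∈ Tg, ‖g u‖ ^ q :=
    Finset.sum_nonneg fun u _ => Real.rpow_nonneg (norm_nonneg _) q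
  have hHnn : 0 ≤ ∑ s ∈ S, ‖h s‖ ^ q :=
    Finset.sum_nonneg fun s _ => Real.rpow_nonneg (norm_nonneg _) q
  unfold lqNorm
  rw [hsumh, hsumf, hsumg]
  calc (∑ s ∈ S, ‖h s‖ ^ q) ^ (1 / q)
      ≤ ((∑ t ∈ Tf, ‖f t‖ ^ q) * ∑ u ∈ Tg, ‖g u‖ ^ q) ^ (1 / q) :=
        Real.rpow_le_rpow hHnn main (by positivity)
    _ = (∑ t ∈ Tf, ‖f t‖ ^ q) ^ (1 / q) * (∑ u ∈ Tg, ‖g u‖ ^ q) ^ (1 / q) :=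
        Real.mul_rpow hFnn hGnn
end

section
/- Let F_d be the free group on d ≥ 2 generators and let 1 ≤ q ≤ 2. If f, g : F_d → ℂ are finitely supported with supp(f) ⊆ W_k and supp(g) ⊆ W_ℓ, and |k-ℓ| ≤ m ≤ k+ℓ with k+ℓ-m even, then |(f*g)·χ_m|_q ≤ |f|_q · |g|_q. -/
namespace FGHaagerup

open FreeGroup List

variable {α : Type*} [DecidableEq α]

/-- Reduced words as a chain condition. -/
def IsRed (L : List (α × Bool)) : Prop :=
  List.Chain' (fun a b => ¬(a.1 = b.1 ∧ a.2 = !b.2)) L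

theorem reduce_eq_self_of_isRed : ∀ {L : List (α × Bool)}, IsRed L → FreeGroup.reduce L = L
  | [], _ => rfl
  | x :: L, h => by
    have hL : FreeGroup.reduce L = L := reduce_eq_self_of_isRed h.tail
    rw [FreeGroup.reduce.cons, hL]
    cases L with
    | nil => rfl
    | cons y t =>
      have hxy : ¬(x.1 = y.1 ∧ x.2 = !y.2) := (List.isChain_cons_cons.1 h).1
      simp [hxy]

theorem isRed_of_reduce_eq_self : ∀ {L : List (α × Bool)}, FreeGroup.reduce L = L → IsRed L
  | [], _ => List.isChain_nil
  | x :: L, h => by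
    have hlen := FreeGroup.Red.length_le (FreeGroup.reduce.red (L := L))
    rw [FreeGroup.reduce.cons] at h
    cases r : FreeGroup.reduce L with
    | nil =>
      rw [r] at h
      dsimp at h
      injection h with _ h'
      subst h'
      exact List.isChain_singleton x
    | cons y t =>
      rw [r] at h
      dsimp at h
      by_cases hc : x.1 = y.1 ∧ x.2 = !y.2
      · exfalso
        rw [if_pos hc] at h
        have h1 := congrArg List.length h
        rw [r] at hlen
        simp at h1 hlen
        omega
      · rw [if_neg hc] at h
        have h2 : y :: t = L := by injection h
        have hLred : FreeGroup.reduce L = L := by rw [r, h2]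
        have := isRed_of_reduce_eq_self hLred
        rw [← h2] at this ⊢
        exact List.isChain_cons_cons.2 ⟨hc, this⟩

theorem isRed_toWord (x : FreeGroup α) : IsRed x.toWord :=
  isRed_of_reduce_eq_self (FreeGroup.reduce_toWord x)

theorem IsRed.append_left {L1 L2 : List (α × Bool)} (h : IsRed (L1 ++ L2)) : IsRed L1 :=
  (List.isChain_append.1 h).1

theorem IsRed.append_right {L1 L2 : List (α × Bool)} (h : IsRed (L1 ++ L2)) : IsRed L2 :=
  (List.isChain_append.1 h).2.1

/-- Key cancellation lemma for products of reduced words. -/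
theorem cancel : ∀ (L1 L2 : List (α × Bool)), IsRed L1 → IsRed L2 →
    ∃ P V Q : List (α × Bool), L1 = P ++ V ∧ L2 = FreeGroup.invRev V ++ Q ∧
      FreeGroup.reduce (L1 ++ L2) = P ++ Q := by
  intro L1
  induction L1 using List.reverseRecOn with
  | nil =>
    intro L2 _ h2
    exact ⟨[], [], L2, rfl, by simp [FreeGroup.invRev], by simpa using reduce_eq_self_of_isRed h2⟩
  | append_singleton L1' a ih =>
    intro L2 h1 h2
    cases L2 with
    | nil =>
      exact ⟨L1' ++ [a], [], [], by simp, by simp [FreeGroup.invRev],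
        by simpa using reduce_eq_self_of_isRed h1⟩
    | cons b L2' =>
      by_cases hc : a.1 = b.1 ∧ a.2 = !b.2
      · -- cancellation at the junction
        obtain ⟨P, V, Q, e1, e2, e3⟩ := ih L2' h1.append_left h2.tail
        refine ⟨P, V ++ [a], Q, by rw [e1, List.append_assoc], ?_, ?_⟩
        · have hb : b = (a.1, !a.2) := by
            obtain ⟨h1', h2'⟩ := hc
            cases b
            simp_all
          rw [hb]
          simp only [FreeGroup.invRev] at e2 ⊢
          simp [e2, Bool.not_not]
        · have hb : b = (a.1, !a.2) := by
            obtain ⟨h1', h2'⟩ := hc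
            cases b
            simp_all
          have hstep : FreeGroup.Red.Step ((L1' ++ [a]) ++ b :: L2') (L1' ++ L2') := by
            rw [hb]
            have : (L1' ++ [a]) ++ (a.1, !a.2) :: L2'
                = L1' ++ (a.1, a.2) :: (a.1, !a.2) :: L2' := by simp
            rw [this]
            exact FreeGroup.Red.Step.not
          rw [FreeGroup.reduce.Step.eq hstep, e3]
      · -- no cancellation: whole thing is reduced
        refine ⟨L1' ++ [a], [], b :: L2', by simp, by simp [FreeGroup.invRev], ?_⟩
        have : IsRed ((L1' ++ [a]) ++ b :: L2') := by
          refine List.isChain_append.2 ⟨h1, h2, ?_⟩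
          intro x hx y hy
          simp at hx hy
          subst hx
          cases hy
          exact hc
        simpa using reduce_eq_self_of_isRed this

/-- Prefix of the reduced word. -/
def pre (n : ℕ) (s : FreeGroup α) : FreeGroup α := FreeGroup.mk (s.toWord.take n)

/-- Suffix of the reduced word. -/
def suf (n : ℕ) (s : FreeGroup α) : FreeGroup α := FreeGroup.mk (s.toWord.drop n)

theorem pre_mul_suf (n : ℕ) (s : FreeGroup α) : pre n s * suf n s = s := by
  rw [pre, suf, FreeGroup.mul_mk, List.take_append_drop, FreeGroup.mk_toWord]

theorem decomp (t u : FreeGroup α) :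
    ∃ jj : ℕ, t.norm + u.norm = (t * u).norm + 2 * jj ∧
      pre (t.norm - jj) t = pre (t.norm - jj) (t * u) ∧
      suf jj u = suf (t.norm - jj) (t * u) := by
  obtain ⟨P, V, Q, e1, e2, e3⟩ := cancel t.toWord u.toWord (isRed_toWord t) (isRed_toWord u)
  have htu : (t * u).toWord = P ++ Q := by
    conv_lhs => rw [← FreeGroup.mk_toWord (x := t), ← FreeGroup.mk_toWord (x := u)]
    rw [FreeGroup.mul_mk, FreeGroup.toWord_mk, e3]
  have hnt : t.norm = P.length + V.length := by
    rw [FreeGroup.norm, e1, List.length_append]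
  have hnu : u.norm = V.length + Q.length := by
    rw [FreeGroup.norm, e2, List.length_append, FreeGroup.invRev_length]
  have hntu : (t * u).norm = P.length + Q.length := by
    rw [FreeGroup.norm, htu, List.length_append]
  refine ⟨V.length, by omega, ?_, ?_⟩
  · have hP : t.norm - V.length = P.length := by omega
    rw [pre, pre, hP, htu, e1, List.take_left, List.take_left]
  · have hP : t.norm - V.length = P.length := by omega
    rw [suf, suf, hP, htu, e2, List.drop_left, List.drop_left']
    rw [FreeGroup.invRev_length]

theorem add_rpow_le {a b p : ℝ} (ha : 0 ≤ a) (hb : 0 ≤ b) (hp : 0 ≤ p) (hp1 : p ≤ 1) :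
    (a + b) ^ p ≤ a ^ p + b ^ p := by
  lift a to NNReal using ha
  lift b to NNReal using hb
  exact_mod_cast NNReal.rpow_add_le_add_rpow a b hp hp1

theorem rpow_sum_le {ι : Type*} (s : Finset ι) (f : ι → ℝ) (hf : ∀ i ∈ s, 0 ≤ f i)
    {p : ℝ} (hp : 0 < p) (hp1 : p ≤ 1) :
    (∑ i ∈ s, f i) ^ p ≤ ∑ i ∈ s, f i ^ p := by
  induction s using Finset.cons_induction with
  | empty => simp [Real.zero_rpow hp.ne']
  | cons a s ha ih =>
    rw [Finset.sum_cons, Finset.sum_cons]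
    have h1 : 0 ≤ f a := hf a (Finset.mem_cons_self a s)
    have h2 : ∀ i ∈ s, 0 ≤ f i := fun i hi => hf i (Finset.mem_cons_of_mem hi)
    have h3 : (0:ℝ) ≤ ∑ i ∈ s, f i := Finset.sum_nonneg h2
    calc (f a + ∑ i ∈ s, f i) ^ p ≤ f a ^ p + (∑ i ∈ s, f i) ^ p :=
          add_rpow_le h1 h3 hp.le hp1
      _ ≤ f a ^ p + ∑ i ∈ s, f i ^ p := by
          gcongr
          exact ih h2

theorem hoelder_step {ι : Type*} (T : Finset ι) (a b : ι → ℝ)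
    (ha : ∀ i, 0 ≤ a i) (hb : ∀ i, 0 ≤ b i) {q : ℝ} (hq1 : 1 ≤ q) (hq2 : q ≤ 2) :
    (∑ i ∈ T, a i * b i) ^ q ≤ (∑ i ∈ T, a i ^ q) * (∑ i ∈ T, b i ^ q) := by
  have hq0 : (0:ℝ) < q := lt_of_lt_of_le one_pos hq1
  have hS : (0:ℝ) ≤ ∑ i ∈ T, a i * b i :=
    Finset.sum_nonneg fun i _ => mul_nonneg (ha i) (hb i)
  have hA2 : (0:ℝ) ≤ ∑ i ∈ T, a i ^ 2 := Finset.sum_nonneg fun i _ => sq_nonneg _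
  have hB2 : (0:ℝ) ≤ ∑ i ∈ T, b i ^ 2 := Finset.sum_nonneg fun i _ => sq_nonneg _
  have key : ∀ c : ι → ℝ, (∀ i, 0 ≤ c i) →
      (∑ i ∈ T, c i ^ 2) ^ (q/2) ≤ ∑ i ∈ T, c i ^ q := by
    intro c hc
    calc (∑ i ∈ T, c i ^ 2) ^ (q/2) ≤ ∑ i ∈ T, (c i ^ 2) ^ (q/2) :=
          rpow_sum_le T _ (fun i _ => sq_nonneg _) (by linarith) (by linarith)
      _ = ∑ i ∈ T, c i ^ q := by
          refine Finset.sum_congr rfl fun i _ => ?_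
          rw [← Real.rpow_natCast (c i) 2, ← Real.rpow_mul (hc i)]
          norm_num
          congr 1
          ring
  calc (∑ i ∈ T, a i * b i) ^ q
      = (((∑ i ∈ T, a i * b i) ^ 2 : ℝ)) ^ (q/2) := by
        rw [← Real.rpow_natCast (∑ i ∈ T, a i * b i) 2, ← Real.rpow_mul hS]
        norm_num
        congr 1
        ring
    _ ≤ ((∑ i ∈ T, a i ^ 2) * (∑ i ∈ T, b i ^ 2)) ^ (q/2) := by
        apply Real.rpow_le_rpow (sq_nonneg _) (Finset.sum_mul_sq_le_sq_mul_sq T a b)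
        linarith
    _ = (∑ i ∈ T, a i ^ 2) ^ (q/2) * (∑ i ∈ T, b i ^ 2) ^ (q/2) :=
        Real.mul_rpow hA2 hB2
    _ ≤ (∑ i ∈ T, a i ^ q) * (∑ i ∈ T, b i ^ q) := by
        apply mul_le_mul (key a ha) (key b hb) (Real.rpow_nonneg hB2 _)
        exact Finset.sum_nonneg fun i _ => Real.rpow_nonneg (ha i) _

end FGHaagerup

open FGHaagerup in
/-- for `1 ≤ q ≤ 2`, `supp f ⊆ W_k`, `supp g ⊆ W_ℓ`, `|k-ℓ| ≤ m ≤ k+ℓ` with `k+ℓ-m` even,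
one has `|(f*g)χ_m|_q ≤ |f|_q |g|_q`. -/
theorem conv_sphere_norm (d k l m : ℕ) (hd : 2 ≤ d) (q : ℝ)
    (hq1 : 1 ≤ q) (hq2 : q ≤ 2)
    (f g : FreeGroup (Fin d) → ℂ)
    (hf : (Function.support f).Finite) (hg : (Function.support g).Finite)
    (hfk : ∀ t, f t ≠ 0 → FreeGroup.norm t = k)
    (hgl : ∀ u, g u ≠ 0 → FreeGroup.norm u = l)
    (hm1 : |(k : ℤ) - (l : ℤ)| ≤ (m : ℤ)) (hm2 : m ≤ k + l)
    (hm3 : Even ((k : ℤ) + l - m)) :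
    lqNorm q (fun s => if FreeGroup.norm s = m then conv f g s else 0) ≤
      lqNorm q f * lqNorm q g := by
  classical
  have hq0 : (0:ℝ) < q := lt_of_lt_of_le one_pos hq1
  set j : ℕ := (k + l - m) / 2 with hjdef
  obtain ⟨c, hc⟩ := hm3
  have hj : k + l = m + 2 * j := by omega
  set p : ℕ := k - j with hpdef
  set F : Finset (FreeGroup (Fin d)) := hf.toFinset with hF
  set G : Finset (FreeGroup (Fin d)) := hg.toFinset with hG
  have hmemF : ∀ t, t ∈ F ↔ f t ≠ 0 := fun t => by
    rw [hF, Set.Finite.mem_toFinset, Function.mem_support]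
  have hmemG : ∀ u, u ∈ G ↔ g u ≠ 0 := fun u => by
    rw [hG, Set.Finite.mem_toFinset, Function.mem_support]
  -- convolution as a finite sum
  have hconv : ∀ s, conv f g s = ∑ t ∈ F, f t * g (t⁻¹ * s) := by
    intro s
    apply tsum_eq_sum
    intro t ht
    rw [hmemF, not_not] at ht
    rw [ht, zero_mul]
  -- the key geometric claim
  have claim : ∀ s t : FreeGroup (Fin d), FreeGroup.norm s = m → f t ≠ 0 →
      g (t⁻¹ * s) ≠ 0 → pre p t = pre p s ∧ suf j (t⁻¹ * s) = suf p s := by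
    intro s t hs hft hgt
    have hk := hfk t hft
    have hl := hgl _ hgt
    obtain ⟨jj, hjj, h1, h2⟩ := decomp t (t⁻¹ * s)
    rw [mul_inv_cancel_left] at hjj h1 h2
    rw [hk, hl, hs] at hjj
    have hjjj : jj = j := by omega
    rw [hk, hjjj] at h1 h2
    have hkj : k - j = p := rfl
    rw [hkj] at h1 h2
    exact ⟨h1, h2⟩
  set S' : Finset (FreeGroup (Fin d)) :=
    (Finset.image (fun pr : _ × _ => pr.1 * pr.2) (F ×ˢ G)).filter
      (fun s => FreeGroup.norm s = m) with hS'
  -- outside S' the integrand vanishes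
  have hvanish : ∀ s ∉ S', ‖(if FreeGroup.norm s = m then conv f g s else 0)‖ ^ q = 0 := by
    intro s hs
    by_cases hm : FreeGroup.norm s = m
    · rw [if_pos hm]
      have : conv f g s = 0 := by
        rw [hconv]
        apply Finset.sum_eq_zero
        intro t ht
        by_contra hne
        have hgt : g (t⁻¹ * s) ≠ 0 := right_ne_zero_of_mul hne
        apply hs
        rw [hS', Finset.mem_filter]
        refine ⟨Finset.mem_image.2 ⟨(t, t⁻¹ * s), ?_, ?_⟩, hm⟩
        · rw [Finset.mem_product]
          exact ⟨ht, (hmemG _).2 hgt⟩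
        · exact mul_inv_cancel_left t s
      rw [this, norm_zero, Real.zero_rpow hq0.ne']
    · rw [if_neg hm, norm_zero, Real.zero_rpow hq0.ne']
  -- norms as finite sums
  have hlqf : lqNorm q f = (∑ t ∈ F, ‖f t‖ ^ q) ^ (1/q) := by
    rw [lqNorm]
    congr 1
    apply tsum_eq_sum
    intro t ht
    rw [hmemF, not_not] at ht
    rw [ht, norm_zero, Real.zero_rpow hq0.ne']
  have hlqg : lqNorm q g = (∑ u ∈ G, ‖g u‖ ^ q) ^ (1/q) := by
    rw [lqNorm]
    congr 1
    apply tsum_eq_sum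
    intro u hu
    rw [hmemG, not_not] at hu
    rw [hu, norm_zero, Real.zero_rpow hq0.ne']
  have hlqh : lqNorm q (fun s => if FreeGroup.norm s = m then conv f g s else 0)
      = (∑ s ∈ S', ‖conv f g s‖ ^ q) ^ (1/q) := by
    rw [lqNorm]
    congr 1
    rw [tsum_eq_sum hvanish]
    refine Finset.sum_congr rfl fun s hs => ?_
    rw [if_pos (Finset.mem_filter.1 hs).2]
  set A : FreeGroup (Fin d) → ℝ :=
    fun y => ∑ t ∈ F.filter (fun t => pre p t = y), ‖f t‖ ^ q with hA
  set B : FreeGroup (Fin d) → ℝ :=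
    fun z => ∑ u ∈ G.filter (fun u => suf j u = z), ‖g u‖ ^ q with hB
  have hAnonneg : ∀ y, 0 ≤ A y := fun y =>
    Finset.sum_nonneg fun t _ => Real.rpow_nonneg (norm_nonneg _) _
  have hBnonneg : ∀ z, 0 ≤ B z := fun z =>
    Finset.sum_nonneg fun u _ => Real.rpow_nonneg (norm_nonneg _) _
  -- pointwise bound
  have hpoint : ∀ s ∈ S', ‖conv f g s‖ ^ q ≤ A (pre p s) * B (suf p s) := by
    intro s hsS'
    have hs : FreeGroup.norm s = m := (Finset.mem_filter.1 hsS').2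
    set T : Finset (FreeGroup (Fin d)) := F.filter (fun t => g (t⁻¹ * s) ≠ 0) with hT
    have hcs : conv f g s = ∑ t ∈ T, f t * g (t⁻¹ * s) := by
      rw [hconv, hT]
      exact (Finset.sum_filter_of_ne fun t ht hne => right_ne_zero_of_mul hne).symm
    have step1 : ‖conv f g s‖ ^ q ≤ (∑ t ∈ T, ‖f t‖ * ‖g (t⁻¹ * s)‖) ^ q := by
      apply Real.rpow_le_rpow (norm_nonneg _) _ hq0.le
      rw [hcs]
      refine (norm_sum_le _ _).trans (le_of_eq ?_)
      exact Finset.sum_congr rfl fun t _ => norm_mul _ _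
    have step2 : (∑ t ∈ T, ‖f t‖ * ‖g (t⁻¹ * s)‖) ^ q
        ≤ (∑ t ∈ T, ‖f t‖ ^ q) * (∑ t ∈ T, ‖g (t⁻¹ * s)‖ ^ q) :=
      hoelder_step T _ _ (fun t => norm_nonneg _) (fun t => norm_nonneg _) hq1 hq2
    have step3 : (∑ t ∈ T, ‖f t‖ ^ q) ≤ A (pre p s) := by
      rw [hA]
      apply Finset.sum_le_sum_of_subset_of_nonneg
      · intro t ht
        rw [hT, Finset.mem_filter] at ht
        rw [Finset.mem_filter]
        exact ⟨ht.1, (claim s t hs ((hmemF t).1 ht.1) ht.2).1⟩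
      · exact fun t _ _ => Real.rpow_nonneg (norm_nonneg _) _
    have step4 : (∑ t ∈ T, ‖g (t⁻¹ * s)‖ ^ q) ≤ B (suf p s) := by
      have hinj : ∀ x ∈ T, ∀ y ∈ T, x⁻¹ * s = y⁻¹ * s → x = y := by
        intro x _ y _ hxy
        have := mul_right_cancel (a := x⁻¹) (b := s) (c := y⁻¹) hxy
        exact inv_injective this
      have himg : ∑ u ∈ T.image (fun t => t⁻¹ * s), ‖g u‖ ^ q
          = ∑ t ∈ T, ‖g (t⁻¹ * s)‖ ^ q := Finset.sum_image hinj
      rw [← himg, hB]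
      apply Finset.sum_le_sum_of_subset_of_nonneg
      · intro u hu
        rw [Finset.mem_image] at hu
        obtain ⟨t, ht, rfl⟩ := hu
        rw [hT, Finset.mem_filter] at ht
        rw [Finset.mem_filter]
        exact ⟨(hmemG _).2 ht.2, (claim s t hs ((hmemF t).1 ht.1) ht.2).2⟩
      · exact fun u _ _ => Real.rpow_nonneg (norm_nonneg _) _
    calc ‖conv f g s‖ ^ q ≤ (∑ t ∈ T, ‖f t‖ * ‖g (t⁻¹ * s)‖) ^ q := step1
      _ ≤ (∑ t ∈ T, ‖f t‖ ^ q) * (∑ t ∈ T, ‖g (t⁻¹ * s)‖ ^ q) := step2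
      _ ≤ A (pre p s) * B (suf p s) := by
          apply mul_le_mul step3 step4
            (Finset.sum_nonneg fun t _ => Real.rpow_nonneg (norm_nonneg _) _)
            (hAnonneg _)
  -- global bound
  have hkey : (∑ s ∈ S', ‖conv f g s‖ ^ q)
      ≤ (∑ t ∈ F, ‖f t‖ ^ q) * (∑ u ∈ G, ‖g u‖ ^ q) := by
    have hφinj : ∀ x ∈ S', ∀ y ∈ S',
        (fun s => (pre p s, suf p s)) x = (fun s => (pre p s, suf p s)) y → x = y := by
      intro x _ y _ hxy
      simp only [Prod.mk.injEq] at hxy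
      rw [← pre_mul_suf p x, ← pre_mul_suf p y, hxy.1, hxy.2]
    calc (∑ s ∈ S', ‖conv f g s‖ ^ q)
        ≤ ∑ s ∈ S', A (pre p s) * B (suf p s) := Finset.sum_le_sum hpoint
      _ = ∑ y ∈ S'.image (fun s => (pre p s, suf p s)), A y.1 * B y.2 :=
          (Finset.sum_image
            (f := fun y : FreeGroup (Fin d) × FreeGroup (Fin d) => A y.1 * B y.2) hφinj).symm
      _ ≤ ∑ y ∈ (S'.image (pre p)) ×ˢ (S'.image (suf p)), A y.1 * B y.2 := by
          apply Finset.sum_le_sum_of_subset_of_nonneg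
          · intro y hy
            rw [Finset.mem_image] at hy
            obtain ⟨s, hsmem, rfl⟩ := hy
            rw [Finset.mem_product]
            exact ⟨Finset.mem_image_of_mem _ hsmem, Finset.mem_image_of_mem _ hsmem⟩
          · exact fun y _ _ => mul_nonneg (hAnonneg _) (hBnonneg _)
      _ = (∑ y ∈ S'.image (pre p), A y) * (∑ z ∈ S'.image (suf p), B z) := by
          rw [Finset.sum_mul_sum, Finset.sum_product]
      _ ≤ (∑ t ∈ F, ‖f t‖ ^ q) * (∑ u ∈ G, ‖g u‖ ^ q) := by
          apply mul_le_mul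
          · rw [hA, Finset.sum_fiberwise_eq_sum_filter]
            apply Finset.sum_le_sum_of_subset_of_nonneg (Finset.filter_subset _ _)
            exact fun t _ _ => Real.rpow_nonneg (norm_nonneg _) _
          · rw [hB, Finset.sum_fiberwise_eq_sum_filter]
            apply Finset.sum_le_sum_of_subset_of_nonneg (Finset.filter_subset _ _)
            exact fun u _ _ => Real.rpow_nonneg (norm_nonneg _) _
          · exact Finset.sum_nonneg fun z _ => hBnonneg _
          · exact Finset.sum_nonneg fun t _ => Real.rpow_nonneg (norm_nonneg _) _
  -- conclude
  rw [hlqh, hlqf, hlqg]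
  rw [← Real.mul_rpow (Finset.sum_nonneg fun t _ => Real.rpow_nonneg (norm_nonneg _) _)
    (Finset.sum_nonneg fun u _ => Real.rpow_nonneg (norm_nonneg _) _)]
  apply Real.rpow_le_rpow
    (Finset.sum_nonneg fun s _ => Real.rpow_nonneg (norm_nonneg _) _) hkey
  positivity
end

section
/- Let F_d be the free group on d ≥ 2 generators, let 1 < q ≤ 2, and let k ≥ 0. For any finitely supported f : F_d → ℂ with supp(f) ⊆ W_k and any finitely supported g : F_d → ℂ, the ℓ_q norm of the convolution satisfies |f*g|_q ≤ (k+1)·|f|_q·|g|_q. -/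
open List

namespace FreeGroupConv

variable {α : Type*} [DecidableEq α]

open FreeGroup

/-- A word is reduced if no two adjacent letters cancel. -/
def IsRed (L : List (α × Bool)) : Prop :=
  List.Chain' (fun a b => ¬(a.1 = b.1 ∧ a.2 = !b.2)) L

theorem isRed_reduce (L : List (α × Bool)) : IsRed (reduce L) := by
  induction L with
  | nil => simp [IsRed, List.Chain']
  | cons x L ih =>
    rw [FreeGroup.reduce.cons]
    rcases h : reduce L with _ | ⟨hd, tl⟩
    · simp [IsRed, List.Chain']
    · rw [h] at ih
      dsimp only
      split_ifs with hc
      · exact ih.tail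
      · exact List.isChain_cons_cons.2 ⟨hc, ih⟩

theorem reduce_eq_self_of_isRed {L : List (α × Bool)} (h : IsRed L) : reduce L = L := by
  induction L with
  | nil => rfl
  | cons x L ih =>
    have hL : IsRed L := h.tail
    rw [FreeGroup.reduce.cons, ih hL]
    rcases hL' : L with _ | ⟨hd, tl⟩
    · rfl
    · dsimp only
      rw [hL'] at h
      rw [if_neg (List.isChain_cons_cons.1 h).1]

theorem isRed_toWord (x : FreeGroup α) : IsRed x.toWord := by
  rw [← FreeGroup.reduce_toWord]
  exact isRed_reduce _

theorem exists_decomp (L₁ L₂ : List (α × Bool)) (h1 : IsRed L₁) (h2 : IsRed L₂) :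
    ∃ A B C, L₁ = A ++ B ∧ L₂ = invRev B ++ C ∧ reduce (L₁ ++ L₂) = A ++ C := by
  rcases List.eq_nil_or_concat L₁ with rfl | ⟨M, ⟨x, b⟩, rfl⟩
  · exact ⟨[], [], L₂, rfl, by simp [invRev], by simpa using reduce_eq_self_of_isRed h2⟩
  simp only [List.concat_eq_append] at h1 ⊢
  rcases L₂ with _ | ⟨⟨y, c⟩, N⟩
  · exact ⟨M ++ [(x, b)], [], [], by simp, by simp [invRev],
      by simpa using reduce_eq_self_of_isRed h1⟩
  by_cases hc : x = y ∧ b = !c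
  · obtain ⟨rfl, rfl⟩ := hc
    have hM : IsRed M := (List.isChain_append.mp h1).1
    have hN : IsRed N := h2.tail
    obtain ⟨A, B, C, e1, e2, e3⟩ := exists_decomp M N hM hN
    refine ⟨A, B ++ [(x, !c)], C, by rw [e1]; simp, ?_, ?_⟩
    · show (x, c) :: N = invRev (B ++ [(x, !c)]) ++ C
      rw [e2]
      simp [invRev]
    · have step : FreeGroup.Red.Step ((M ++ [(x, !c)]) ++ (x, c) :: N) (M ++ N) := by
        have := @FreeGroup.Red.Step.not α M N x c
        simpa using this
      rw [FreeGroup.reduce.Step.eq step, e3]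
  · refine ⟨M ++ [(x, b)], [], (y, c) :: N, by simp, by simp [invRev], ?_⟩
    apply reduce_eq_self_of_isRed
    apply List.IsChain.append h1 h2
    intro a ha b' hb'
    simp only [List.getLast?_concat, Option.mem_def,
      Option.some.injEq, List.head?_cons] at ha hb'
    subst ha
    subst hb'
    simpa using hc
termination_by L₁.length
decreasing_by simp_all [List.concat_eq_append]

theorem decomp_mul (x y : FreeGroup α) :
    ∃ A B C, x.toWord = A ++ B ∧ y.toWord = invRev B ++ C ∧ (x * y).toWord = A ++ C := by
  obtain ⟨A, B, C, e1, e2, e3⟩ :=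
    exists_decomp x.toWord y.toWord (isRed_toWord x) (isRed_toWord y)
  refine ⟨A, B, C, e1, e2, ?_⟩
  conv_lhs => rw [← FreeGroup.mk_toWord (x := x), ← FreeGroup.mk_toWord (x := y)]
  rw [FreeGroup.mul_mk, FreeGroup.toWord_mk, e3]

/-- The amount of cancellation in the product `x * y`. -/
def can (x y : FreeGroup α) : ℕ := (norm x + norm y - norm (x * y)) / 2

theorem norm_eq_length (x : FreeGroup α) : norm x = x.toWord.length := rfl

theorem can_spec {x y : FreeGroup α} {A B C : List (α × Bool)}
    (e1 : x.toWord = A ++ B) (e2 : y.toWord = invRev B ++ C)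
    (e3 : (x * y).toWord = A ++ C) :
    B.length = can x y ∧ A.length = norm x - can x y ∧ C.length = norm y - can x y := by
  have h1 : norm x = A.length + B.length := by rw [norm_eq_length, e1, List.length_append]
  have h2 : norm y = B.length + C.length := by
    rw [norm_eq_length, e2, List.length_append, FreeGroup.invRev_length]
  have h3 : norm (x * y) = A.length + C.length := by
    rw [norm_eq_length, e3, List.length_append]
  unfold can
  omega

theorem can_le_left (x y : FreeGroup α) : can x y ≤ norm x := by
  obtain ⟨A, B, C, e1, e2, e3⟩ := decomp_mul x y
  obtain ⟨hB, hA, hC⟩ := can_spec e1 e2 e3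
  have h1 : norm x = A.length + B.length := by rw [norm_eq_length, e1, List.length_append]
  omega

theorem toWord_mul_eq (x y : FreeGroup α) :
    (x * y).toWord = x.toWord.take (norm x - can x y) ++ y.toWord.drop (can x y) := by
  obtain ⟨A, B, C, e1, e2, e3⟩ := decomp_mul x y
  obtain ⟨hB, hA, hC⟩ := can_spec e1 e2 e3
  rw [e3]
  congr 1
  · rw [e1, List.take_left' hA]
  · rw [e2, List.drop_left']
    rw [FreeGroup.invRev_length, hB]

theorem key_injectivity {k j : ℕ} {t t' r' s σ : FreeGroup α}
    (ht : norm t = k) (ht' : norm t' = k) (hr' : norm r' = k)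
    (h1 : can t (t⁻¹ * s) = j) (h2 : can t' (t'⁻¹ * s) = j)
    (h3 : can t (t⁻¹ * σ) = j) (h4 : can r' (r'⁻¹ * σ) = j)
    (hu : t'⁻¹ * s = r'⁻¹ * σ) : s = σ ∧ t' = r' := by
  have es : t' * (t'⁻¹ * s) = s := by group
  have es2 : t * (t⁻¹ * s) = s := by group
  have eσ : r' * (r'⁻¹ * σ) = σ := by group
  have eσ2 : t * (t⁻¹ * σ) = σ := by group
  -- four representations
  have w1 : s.toWord = t'.toWord.take (k - j) ++ (t'⁻¹ * s).toWord.drop j := by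
    conv_lhs => rw [← es]
    rw [toWord_mul_eq, ht', h2]
  have w2 : s.toWord = t.toWord.take (k - j) ++ (t⁻¹ * s).toWord.drop j := by
    conv_lhs => rw [← es2]
    rw [toWord_mul_eq, ht, h1]
  have w3 : σ.toWord = r'.toWord.take (k - j) ++ (r'⁻¹ * σ).toWord.drop j := by
    conv_lhs => rw [← eσ]
    rw [toWord_mul_eq, hr', h4]
  have w4 : σ.toWord = t.toWord.take (k - j) ++ (t⁻¹ * σ).toWord.drop j := by
    conv_lhs => rw [← eσ2]
    rw [toWord_mul_eq, ht, h3]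
  have lt' : (t'.toWord.take (k - j)).length = k - j := by
    rw [List.length_take, ← norm_eq_length, ht']
    omega
  have lr' : (r'.toWord.take (k - j)).length = k - j := by
    rw [List.length_take, ← norm_eq_length, hr']
    omega
  have lt : (t.toWord.take (k - j)).length = k - j := by
    rw [List.length_take, ← norm_eq_length, ht]
    omega
  have key : t'.toWord.take (k - j) = r'.toWord.take (k - j) := by
    have a1 : s.toWord.take (k - j) = t'.toWord.take (k - j) := by
      rw [w1, List.take_left' lt']
    have a2 : s.toWord.take (k - j) = t.toWord.take (k - j) := by
      rw [w2, List.take_left' lt]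
    have a3 : σ.toWord.take (k - j) = r'.toWord.take (k - j) := by
      rw [w3, List.take_left' lr']
    have a4 : σ.toWord.take (k - j) = t.toWord.take (k - j) := by
      rw [w4, List.take_left' lt]
    rw [← a1, a2, ← a4, a3]
  have hsσ : s = σ := by
    apply FreeGroup.toWord_injective
    rw [w1, w3, key, hu]
  refine ⟨hsσ, ?_⟩
  have : t'⁻¹ = r'⁻¹ := by
    have := hu
    rw [hsσ] at this
    exact mul_right_cancel this
  simpa using congrArg (·⁻¹) this

theorem sum_rpow_anti {ι : Type*} (s : Finset ι) (b : ι → ℝ) (hb : ∀ i ∈ s, 0 ≤ b i)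
    {p r : ℝ} (hp : 0 < p) (hpr : p ≤ r) :
    (∑ i ∈ s, b i ^ r) ^ (1 / r) ≤ (∑ i ∈ s, b i ^ p) ^ (1 / p) := by
  have hr : 0 < r := hp.trans_le hpr
  set T := ∑ i ∈ s, b i ^ p with hT
  have hT0 : 0 ≤ T := Finset.sum_nonneg fun i hi => Real.rpow_nonneg (hb i hi) p
  rcases eq_or_lt_of_le hT0 with h0 | hTpos
  · have hb0 : ∀ i ∈ s, b i = 0 := by
      intro i hi
      have h1 := (Finset.sum_eq_zero_iff_of_nonneg
        (fun j hj => Real.rpow_nonneg (hb j hj) p)).1 h0.symm i hi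
      have h2 := Real.rpow_natCast (b i) 0
      by_contra hne
      have hpos : 0 < b i := lt_of_le_of_ne (hb i hi) (Ne.symm hne)
      exact absurd h1 (ne_of_gt (Real.rpow_pos_of_pos hpos p))
    have hL : ∑ i ∈ s, b i ^ r = 0 := by
      apply Finset.sum_eq_zero
      intro i hi
      rw [hb0 i hi, Real.zero_rpow hr.ne']
    rw [hL, ← h0, Real.zero_rpow (by positivity), Real.zero_rpow (by positivity)]
  · have hbound : ∀ i ∈ s, b i ^ r ≤ b i ^ p * T ^ ((r - p) / p) := by
      intro i hi
      have hbi := hb i hi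
      have hle : b i ^ p ≤ T :=
        Finset.single_le_sum (fun j hj => Real.rpow_nonneg (hb j hj) p) hi
      have h1 : b i ≤ T ^ (1 / p) := by
        calc b i = (b i ^ p) ^ (1 / p) := by
              rw [← Real.rpow_mul hbi, mul_one_div, div_self hp.ne', Real.rpow_one]
          _ ≤ T ^ (1 / p) :=
              Real.rpow_le_rpow (Real.rpow_nonneg hbi p) hle (by positivity)
      have e : p + (r - p) = r := by ring
      calc b i ^ r = b i ^ p * b i ^ (r - p) := by
            rw [← e, Real.rpow_add' hbi (by rw [e]; exact hr.ne')]
            ring_nf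
        _ ≤ b i ^ p * T ^ ((r - p) / p) := by
            apply mul_le_mul_of_nonneg_left _ (Real.rpow_nonneg hbi p)
            calc b i ^ (r - p) ≤ (T ^ (1 / p)) ^ (r - p) :=
                  Real.rpow_le_rpow hbi h1 (by linarith)
              _ = T ^ ((r - p) / p) := by
                  rw [← Real.rpow_mul hT0]
                  congr 1
                  field_simp
    have hsum : ∑ i ∈ s, b i ^ r ≤ T ^ (r / p) := by
      calc ∑ i ∈ s, b i ^ r ≤ ∑ i ∈ s, b i ^ p * T ^ ((r - p) / p) :=
            Finset.sum_le_sum hbound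
        _ = T * T ^ ((r - p) / p) := by rw [← Finset.sum_mul]
        _ = T ^ (r / p) := by
            have e : r / p = 1 + (r - p) / p := by field_simp; ring
            rw [e, Real.rpow_add hTpos, Real.rpow_one]
    calc (∑ i ∈ s, b i ^ r) ^ (1 / r)
        ≤ (T ^ (r / p)) ^ (1 / r) :=
          Real.rpow_le_rpow
            (Finset.sum_nonneg fun i hi => Real.rpow_nonneg (hb i hi) r) hsum (by positivity)
      _ = T ^ (1 / p) := by
          rw [← Real.rpow_mul hT0]
          congr 1
          field_simp

theorem holder_consequence {ι : Type*} (s : Finset ι) (a b : ι → ℝ)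
    (ha : ∀ i ∈ s, 0 ≤ a i) (hb : ∀ i ∈ s, 0 ≤ b i)
    {q : ℝ} (hq1 : 1 < q) (hq2 : q ≤ 2) :
    ∑ i ∈ s, a i * b i ≤ ((∑ i ∈ s, a i ^ q) * (∑ i ∈ s, b i ^ q)) ^ (1 / q) := by
  have hq0 : 0 < q := lt_trans one_pos hq1
  have hq1' : 0 < q - 1 := by linarith
  set q' : ℝ := q / (q - 1) with hq'
  have hpq : Real.HolderConjugate q q' := by
    exact (Real.holderConjugate_iff_eq_conjExponent hq1).2 hq'
  have hqq' : q ≤ q' := by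
    rw [hq', le_div_iff₀ hq1']
    nlinarith
  have step1 : ∑ i ∈ s, a i * b i ≤
      (∑ i ∈ s, a i ^ q) ^ (1 / q) * (∑ i ∈ s, b i ^ q') ^ (1 / q') :=
    Real.inner_le_Lp_mul_Lq_of_nonneg s hpq ha hb
  have step2 : (∑ i ∈ s, b i ^ q') ^ (1 / q') ≤ (∑ i ∈ s, b i ^ q) ^ (1 / q) :=
    sum_rpow_anti s b hb hq0 hqq'
  calc ∑ i ∈ s, a i * b i
      ≤ (∑ i ∈ s, a i ^ q) ^ (1 / q) * (∑ i ∈ s, b i ^ q) ^ (1 / q) := by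
        refine le_trans step1 ?_
        apply mul_le_mul_of_nonneg_left step2
        exact Real.rpow_nonneg
          (Finset.sum_nonneg fun i hi => Real.rpow_nonneg (ha i hi) q) _
    _ = ((∑ i ∈ s, a i ^ q) * (∑ i ∈ s, b i ^ q)) ^ (1 / q) := by
        rw [Real.mul_rpow
          (Finset.sum_nonneg fun i hi => Real.rpow_nonneg (ha i hi) q)
          (Finset.sum_nonneg fun i hi => Real.rpow_nonneg (hb i hi) q)]

end FreeGroupConv

open scoped ENNReal

namespace FreeGroupConv

theorem lqNorm_eq_sum {G : Type*} {q : ℝ} (hq : 0 < q) (φ : G → ℂ) (W : Finset G)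
    (hW : ∀ s ∉ W, φ s = 0) :
    lqNorm q φ = (∑ s ∈ W, ‖φ s‖ ^ q) ^ (1 / q) := by
  unfold lqNorm
  congr 1
  exact tsum_eq_sum fun s hs => by rw [hW s hs, norm_zero, Real.zero_rpow hq.ne']

theorem memℓp_of_finsupp {G : Type*} {P : ℝ≥0∞} (hP : 0 < P.toReal) (φ : G → ℂ)
    (W : Finset G) (hW : ∀ s ∉ W, φ s = 0) : Memℓp φ P :=
  memℓp_gen (summable_of_ne_finset_zero fun s hs => by
    rw [hW s hs, norm_zero, Real.zero_rpow hP.ne'])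

/-- The core sphere-wise estimate for a fixed amount `j` of cancellation. -/
theorem core_estimate {d : ℕ} (k j : ℕ) {q : ℝ} (hq1 : 1 < q) (hq2 : q ≤ 2)
    (f g : FreeGroup (Fin d) → ℂ)
    (hf : (Function.support f).Finite) (hg : (Function.support g).Finite)
    (hfk : ∀ t, f t ≠ 0 → FreeGroup.norm t = k) :
    lqNorm q (fun s => ∑ t ∈ hf.toFinset.filter (fun t => can t (t⁻¹ * s) = j),
        f t * g (t⁻¹ * s))
      ≤ lqNorm q f * lqNorm q g := by
  classical
  have hq0 : 0 < q := lt_trans one_pos hq1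
  set S : Finset (FreeGroup (Fin d)) := hf.toFinset with hSdef
  set T : Finset (FreeGroup (Fin d)) := hg.toFinset with hTdef
  set S' : Finset (FreeGroup (Fin d)) := (S ×ˢ T).image (fun p => p.1 * p.2) with hS'def
  set V : Finset (FreeGroup (Fin d)) := T ∪ (S ×ˢ S').image (fun p => p.1⁻¹ * p.2) with hVdef
  have hfS : ∀ t ∉ S, f t = 0 := fun t ht => by
    by_contra hne
    exact ht (hf.mem_toFinset.2 (Function.mem_support.2 hne))
  have hgT : ∀ u ∉ T, g u = 0 := fun u hu => by
    by_contra hne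
    exact hu (hg.mem_toFinset.2 (Function.mem_support.2 hne))
  have hgV : ∀ u ∉ V, g u = 0 := fun u hu =>
    hgT u fun h => hu (Finset.mem_union_left _ h)
  set Sfil : FreeGroup (Fin d) → Finset (FreeGroup (Fin d)) := fun s => S.filter (fun t => can t (t⁻¹ * s) = j) with hSfil
  set h : FreeGroup (Fin d) → ℂ := fun s => ∑ t ∈ Sfil s, f t * g (t⁻¹ * s) with hh
  have hsupp : ∀ s ∉ S', h s = 0 := by
    intro s hs
    apply Finset.sum_eq_zero
    intro t ht
    rcases Finset.mem_filter.1 ht with ⟨htS, _⟩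
    by_cases hgz : g (t⁻¹ * s) = 0
    · rw [hgz, mul_zero]
    · exfalso
      apply hs
      rw [hS'def]
      apply Finset.mem_image.2
      refine ⟨(t, t⁻¹ * s), ?_, by group⟩
      exact Finset.mem_product.2 ⟨htS, hg.mem_toFinset.2 (Function.mem_support.2 hgz)⟩
  -- norm representations
  have rep_h : lqNorm q h = (∑ s ∈ S', ‖h s‖ ^ q) ^ (1 / q) :=
    lqNorm_eq_sum hq0 h S' hsupp
  have rep_f : lqNorm q f = (∑ t ∈ S, ‖f t‖ ^ q) ^ (1 / q) :=
    lqNorm_eq_sum hq0 f S hfS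
  have rep_g : lqNorm q g = (∑ u ∈ V, ‖g u‖ ^ q) ^ (1 / q) :=
    lqNorm_eq_sum hq0 g V hgV
  set Ff : FreeGroup (Fin d) → ℝ := fun s => ∑ t ∈ Sfil s, ‖f t‖ ^ q with hFf
  set Gg : FreeGroup (Fin d) → ℝ := fun s => ∑ t ∈ Sfil s, ‖g (t⁻¹ * s)‖ ^ q with hGg
  -- pointwise estimate
  have pointwise : ∀ s, ‖h s‖ ^ q ≤ Ff s * Gg s := by
    intro s
    have h1 : ‖h s‖ ≤ ∑ t ∈ Sfil s, ‖f t‖ * ‖g (t⁻¹ * s)‖ := by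
      refine le_trans (norm_sum_le _ _) (le_of_eq ?_)
      exact Finset.sum_congr rfl fun t _ => norm_mul _ _
    have h2 : ∑ t ∈ Sfil s, ‖f t‖ * ‖g (t⁻¹ * s)‖ ≤ (Ff s * Gg s) ^ (1 / q) :=
      holder_consequence (Sfil s) _ _ (fun t _ => norm_nonneg _)
        (fun t _ => norm_nonneg _) hq1 hq2
    have h3 : ‖h s‖ ≤ (Ff s * Gg s) ^ (1 / q) := le_trans h1 h2
    have hFG : 0 ≤ Ff s * Gg s := by
      apply mul_nonneg <;>
        exact Finset.sum_nonneg fun t _ => Real.rpow_nonneg (norm_nonneg _) q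
    calc ‖h s‖ ^ q ≤ ((Ff s * Gg s) ^ (1 / q)) ^ q :=
          Real.rpow_le_rpow (norm_nonneg _) h3 hq0.le
      _ = Ff s * Gg s := by
          rw [← Real.rpow_mul hFG, one_div, inv_mul_cancel₀ hq0.ne', Real.rpow_one]
  -- double counting
  set U : Finset (FreeGroup (Fin d) × FreeGroup (Fin d) × FreeGroup (Fin d)) := (S' ×ˢ S ×ˢ S).filter
    (fun x => can x.2.1 (x.2.1⁻¹ * x.1) = j ∧ can x.2.2 (x.2.2⁻¹ * x.1) = j) with hU
  set w' : FreeGroup (Fin d) × FreeGroup (Fin d) → ℝ := fun y => ‖f y.1‖ ^ q * ‖g y.2‖ ^ q with hw'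
  set φ : FreeGroup (Fin d) × FreeGroup (Fin d) × FreeGroup (Fin d) → FreeGroup (Fin d) × FreeGroup (Fin d) := fun x => (x.2.1, x.2.2⁻¹ * x.1) with hφ
  have stepi : ∑ s ∈ S', Ff s * Gg s = ∑ x ∈ U, w' (φ x) := by
    rw [hU, Finset.sum_filter, Finset.sum_product]
    refine Finset.sum_congr rfl fun s _ => ?_
    rw [Finset.sum_product, hFf, hGg, hSfil]
    simp only [Finset.sum_filter]
    rw [Finset.sum_mul_sum]
    refine Finset.sum_congr rfl fun t _ => Finset.sum_congr rfl fun t' _ => ?_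
    rw [ite_zero_mul_ite_zero]
  have hinj : ∀ x ∈ U, ∀ y ∈ U, φ x = φ y → x = y := by
    rintro ⟨s, t, t'⟩ hx ⟨σ, r, r'⟩ hy he
    rw [hU, Finset.mem_filter, Finset.mem_product, Finset.mem_product] at hx hy
    obtain ⟨⟨-, htS, ht'S⟩, hc1, hc2⟩ := hx
    obtain ⟨⟨-, hrS, hr'S⟩, hc3, hc4⟩ := hy
    simp only [hφ, Prod.mk.injEq] at he
    obtain ⟨rfl, hu⟩ := he
    have hnt : FreeGroup.norm t = k := hfk t (Function.mem_support.1 (hf.mem_toFinset.1 htS))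
    have hnt' : FreeGroup.norm t' = k := hfk t' (Function.mem_support.1 (hf.mem_toFinset.1 ht'S))
    have hnr' : FreeGroup.norm r' = k := hfk r' (Function.mem_support.1 (hf.mem_toFinset.1 hr'S))
    obtain ⟨rfl, rfl⟩ := key_injectivity hnt hnt' hnr' hc1 hc2 hc3 hc4 hu
    rfl
  have stepii : ∑ x ∈ U, w' (φ x) = ∑ y ∈ U.image φ, w' y :=
    (Finset.sum_image hinj).symm
  have hsub : U.image φ ⊆ S ×ˢ V := by
    intro y hy
    obtain ⟨x, hx, rfl⟩ := Finset.mem_image.1 hy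
    rw [hU, Finset.mem_filter, Finset.mem_product, Finset.mem_product] at hx
    obtain ⟨⟨hxS', hx1, hx2⟩, -, -⟩ := hx
    refine Finset.mem_product.2 ⟨hx1, ?_⟩
    apply Finset.mem_union_right
    exact Finset.mem_image.2 ⟨(x.2.2, x.1), Finset.mem_product.2 ⟨hx2, hxS'⟩, rfl⟩
  have stepiii : ∑ y ∈ U.image φ, w' y ≤ ∑ y ∈ S ×ˢ V, w' y := by
    refine Finset.sum_le_sum_of_subset_of_nonneg hsub fun y _ _ => ?_
    exact mul_nonneg (Real.rpow_nonneg (norm_nonneg _) q)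
      (Real.rpow_nonneg (norm_nonneg _) q)
  have stepiv : ∑ y ∈ S ×ˢ V, w' y = (∑ t ∈ S, ‖f t‖ ^ q) * (∑ u ∈ V, ‖g u‖ ^ q) := by
    rw [Finset.sum_mul_sum, Finset.sum_product]
  have hmain : ∑ s ∈ S', ‖h s‖ ^ q ≤ (∑ t ∈ S, ‖f t‖ ^ q) * (∑ u ∈ V, ‖g u‖ ^ q) := by
    calc ∑ s ∈ S', ‖h s‖ ^ q ≤ ∑ s ∈ S', Ff s * Gg s :=
          Finset.sum_le_sum fun s _ => pointwise s
      _ = ∑ y ∈ U.image φ, w' y := by rw [stepi, stepii]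
      _ ≤ ∑ y ∈ S ×ˢ V, w' y := stepiii
      _ = _ := stepiv
  rw [rep_h, rep_f, rep_g, ← Real.mul_rpow
    (Finset.sum_nonneg fun t _ => Real.rpow_nonneg (norm_nonneg _) q)
    (Finset.sum_nonneg fun u _ => Real.rpow_nonneg (norm_nonneg _) q)]
  exact Real.rpow_le_rpow
    (Finset.sum_nonneg fun s _ => Real.rpow_nonneg (norm_nonneg _) q) hmain (by positivity)

end FreeGroupConv

/-- for `1 < q ≤ 2` and `supp f ⊆ W_k`, one has
`|f*g|_q ≤ (k+1)|f|_q|g|_q` for every finitely supported `g`. -/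
theorem conv_norm_bound (d k : ℕ) (hd : 2 ≤ d) (q : ℝ) (hq1 : 1 < q) (hq2 : q ≤ 2)
    (f g : FreeGroup (Fin d) → ℂ)
    (hf : (Function.support f).Finite) (hg : (Function.support g).Finite)
    (hfk : ∀ t, f t ≠ 0 → FreeGroup.norm t = k) :
    lqNorm q (conv f g) ≤ ((k : ℝ) + 1) * lqNorm q f * lqNorm q g := by
  classical
  have hq0 : 0 < q := lt_trans one_pos hq1
  set P : ℝ≥0∞ := ENNReal.ofReal q with hPdef
  have hPto : P.toReal = q := ENNReal.toReal_ofReal hq0.le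
  have hPpos : 0 < P.toReal := by rw [hPto]; exact hq0
  haveI : Fact (1 ≤ P) :=
    ⟨by rw [hPdef, ← ENNReal.ofReal_one]; exact ENNReal.ofReal_le_ofReal hq1.le⟩
  set S : Finset (FreeGroup (Fin d)) := hf.toFinset with hSdef
  set T : Finset (FreeGroup (Fin d)) := hg.toFinset with hTdef
  set S' : Finset (FreeGroup (Fin d)) := (S ×ˢ T).image (fun p => p.1 * p.2) with hS'def
  have hfS : ∀ t ∉ S, f t = 0 := fun t ht => by
    by_contra hne
    exact ht (hf.mem_toFinset.2 (Function.mem_support.2 hne))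
  set h : ℕ → FreeGroup (Fin d) → ℂ := fun j s =>
    ∑ t ∈ hf.toFinset.filter (fun t => FreeGroupConv.can t (t⁻¹ * s) = j),
      f t * g (t⁻¹ * s) with hh
  have hsupp : ∀ j, ∀ s ∉ S', h j s = 0 := by
    intro j s hs
    apply Finset.sum_eq_zero
    intro t ht
    rcases Finset.mem_filter.1 ht with ⟨htS, -⟩
    by_cases hgz : g (t⁻¹ * s) = 0
    · rw [hgz, mul_zero]
    · exfalso
      apply hs
      rw [hS'def]
      apply Finset.mem_image.2
      refine ⟨(t, t⁻¹ * s), ?_, by group⟩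
      exact Finset.mem_product.2 ⟨htS, hg.mem_toFinset.2 (Function.mem_support.2 hgz)⟩
  have hmem : ∀ j, Memℓp (h j) P := fun j =>
    FreeGroupConv.memℓp_of_finsupp hPpos _ S' (hsupp j)
  set F : ℕ → lp (fun _ : FreeGroup (Fin d) => ℂ) P := fun j => ⟨h j, hmem j⟩ with hF
  have hconv : conv f g = ⇑(∑ j ∈ Finset.range (k + 1), F j) := by
    rw [lp.coeFn_sum]
    funext s
    rw [Finset.sum_apply]
    show (∑' t, f t * g (t⁻¹ * s)) = _
    rw [tsum_eq_sum (s := S) (fun t ht => by rw [hfS t ht, zero_mul])]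
    have hmap : ∀ t ∈ S, FreeGroupConv.can t (t⁻¹ * s) ∈ Finset.range (k + 1) := by
      intro t htS
      have hnt : FreeGroup.norm t = k :=
        hfk t (Function.mem_support.1 (hf.mem_toFinset.1 htS))
      have := FreeGroupConv.can_le_left t (t⁻¹ * s)
      exact Finset.mem_range.2 (by omega)
    exact (Finset.sum_fiberwise_of_maps_to hmap _).symm
  have hnorm : ∀ (φ : lp (fun _ : FreeGroup (Fin d) => ℂ) P), ‖φ‖ = lqNorm q ⇑φ := by
    intro φ
    rw [lp.norm_eq_tsum_rpow hPpos φ, hPto]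
    rfl
  calc lqNorm q (conv f g) = ‖∑ j ∈ Finset.range (k + 1), F j‖ := by
        rw [hconv]
        exact (hnorm _).symm
    _ ≤ ∑ j ∈ Finset.range (k + 1), ‖F j‖ := norm_sum_le _ _
    _ ≤ ∑ _j ∈ Finset.range (k + 1), lqNorm q f * lqNorm q g := by
        refine Finset.sum_le_sum fun j _ => ?_
        rw [hnorm (F j)]
        exact FreeGroupConv.core_estimate k j hq1 hq2 f g hf hg hfk
    _ = ((k : ℝ) + 1) * lqNorm q f * lqNorm q g := by
        rw [Finset.sum_const, Finset.card_range, nsmul_eq_mul]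
        push_cast
        ring
end

section
/- Let F_d be the free group on d ≥ 2 generators, 1 < q ≤ 2, k ≥ 0, and n ≥ 1. For any finitely supported f : F_d → ℂ with supp(f) ⊆ W_k, the 4n-fold convolution power satisfies |(f^* * f)^{(*2n)}|_q ≤ (k+1)^{4n-1}·|f|_q^{4n}, where f^*(s) = conj(f(s^{-1})). -/
open Classical in
/-- `convPow h n` is the convolution of `n` copies of `h` (with `convPow h 0`
the Dirac function at the identity). -/
noncomputable def convPow {G : Type*} [Group G] (h : G → ℂ) : ℕ → G → ℂ
  | 0 => fun s => if s = 1 then 1 else 0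
  | n + 1 => conv h (convPow h n)

/-- The adjoint function `f^*(s) = conj (f s⁻¹)`. -/
noncomputable def fstar {G : Type*} [Group G] (f : G → ℂ) : G → ℂ :=
  fun s => (starRingEnd ℂ) (f s⁻¹)

set_option linter.unusedSectionVars false
set_option linter.unusedVariables false

namespace HaagerupAux

open FreeGroup List

variable {α : Type*} [DecidableEq α]

/-- The non-cancellation relation on letters. -/
def NC (x y : α × Bool) : Prop := ¬ (x.1 = y.1 ∧ x.2 = !y.2)

lemma chain'_reduce (L : List (α × Bool)) : List.Chain' NC (reduce L) := by
  induction L with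
  | nil => simp [FreeGroup.reduce, List.Chain']
  | cons x L ih =>
    rw [FreeGroup.reduce.cons]
    rcases h : reduce L with _ | ⟨y, t⟩
    · simp [List.Chain']
    · rw [h] at ih
      by_cases hc : x.1 = y.1 ∧ x.2 = !y.2
      · simpa [hc, List.Chain'] using ih.tail
      · simpa [hc, List.Chain'] using List.IsChain.cons_cons hc ih

lemma reduce_eq_self_of_chain' : ∀ (L : List (α × Bool)), List.Chain' NC L → reduce L = L := by
  intro L
  induction L with
  | nil => simp
  | cons x L ih =>
    intro h
    rw [FreeGroup.reduce.cons, ih h.tail]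
    rcases L with _ | ⟨y, t⟩
    · rfl
    · have : NC x y := (List.isChain_cons_cons.mp h).1
      simp only [NC] at this
      simp [this]

lemma chain'_of_reduce_eq {L : List (α × Bool)} (h : reduce L = L) : List.Chain' NC L :=
  h ▸ chain'_reduce L

lemma reduce_eq_self_iff {L : List (α × Bool)} : reduce L = L ↔ List.Chain' NC L :=
  ⟨chain'_of_reduce_eq, reduce_eq_self_of_chain' L⟩

lemma invRev_append (L₁ L₂ : List (α × Bool)) :
    invRev (L₁ ++ L₂) = invRev L₂ ++ invRev L₁ := by
  simp [invRev]

lemma invRev_singleton (x : α × Bool) : invRev [x] = [(x.1, !x.2)] := by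
  simp [invRev]

/-- Key cancellation lemma: multiplying two reduced words cancels a middle block. -/
lemma exists_cancel : ∀ (L₁ L₂ : List (α × Bool)), reduce L₁ = L₁ → reduce L₂ = L₂ →
    ∃ P W Q : List (α × Bool),
      L₁ = P ++ W ∧ L₂ = invRev W ++ Q ∧ reduce (L₁ ++ L₂) = P ++ Q ∧
      reduce (P ++ Q) = P ++ Q := by
  intro L₁
  induction L₁ using List.reverseRecOn with
  | nil =>
    intro L₂ _ h2
    exact ⟨[], [], L₂, by simp [invRev], by simp [invRev], by simpa using h2, by simpa using h2⟩
  | append_singleton L₁' x ih =>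
    intro L₂ h1 h2
    by_cases hred : List.Chain' NC ((L₁' ++ [x]) ++ L₂)
    · refine ⟨L₁' ++ [x], [], L₂, by simp [invRev], by simp [invRev], ?_, ?_⟩ <;>
        exact reduce_eq_self_of_chain' _ hred
    · -- the junction must cancel
      have hc1 : List.Chain' NC (L₁' ++ [x]) := chain'_of_reduce_eq h1
      have hc2 : List.Chain' NC L₂ := chain'_of_reduce_eq h2
      rcases L₂ with _ | ⟨y, L₂'⟩
      · exact absurd (by simpa using hc1) hred
      · have hcxy : ¬ NC x y := by
          intro hnc
          apply hred
          rw [List.Chain', List.isChain_append]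
          refine ⟨hc1, hc2, ?_⟩
          intro a ha b hb
          simp at ha hb
          subst ha; subst hb; exact hnc
        simp only [NC, not_not] at hcxy
        have hy : y = (x.1, !x.2) := by
          obtain ⟨h1', h2'⟩ := hcxy
          cases y; cases x
          simp_all
        have hL1' : reduce L₁' = L₁' :=
          reduce_eq_self_of_chain' _ (hc1.prefix ⟨[x], rfl⟩)
        have hL2' : reduce L₂' = L₂' :=
          reduce_eq_self_of_chain' _ (hc2.suffix ⟨[y], rfl⟩)
        obtain ⟨P, W, Q, e1, e2, e3, e4⟩ := ih L₂' hL1' hL2'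
        refine ⟨P, W ++ [x], Q, by rw [← List.append_assoc, ← e1], ?_, ?_, e4⟩
        · rw [invRev_append, invRev_singleton, ← hy]
          simpa using congrArg (List.cons y) e2
        · have hstep : FreeGroup.Red.Step ((L₁' ++ [x]) ++ y :: L₂') (L₁' ++ L₂') := by
            rw [hy]
            simpa using (@FreeGroup.Red.Step.not α L₁' L₂' x.1 x.2)
          calc reduce ((L₁' ++ [x]) ++ y :: L₂') = reduce (L₁' ++ L₂') :=
                FreeGroup.reduce.Step.eq hstep
            _ = P ++ Q := e3


lemma norm_def (x : FreeGroup α) : FreeGroup.norm x = x.toWord.length := rfl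

lemma toWord_mk_of_reduced {L : List (α × Bool)} (h : reduce L = L) :
    (FreeGroup.mk L).toWord = L := by rw [FreeGroup.toWord_mk, h]

lemma norm_mk_of_reduced {L : List (α × Bool)} (h : reduce L = L) :
    FreeGroup.norm (FreeGroup.mk L) = L.length := by
  rw [norm_def, toWord_mk_of_reduced h]

/-- Group-level splitting: any product `t * u` splits along a cancelled middle. -/
lemma split (t u : FreeGroup α) : ∃ p w q : FreeGroup α,
    t = p * w ∧ u = w⁻¹ * q ∧
    FreeGroup.norm t = FreeGroup.norm p + FreeGroup.norm w ∧
    FreeGroup.norm u = FreeGroup.norm w + FreeGroup.norm q ∧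
    FreeGroup.norm (t * u) = FreeGroup.norm p + FreeGroup.norm q ∧
    (t * u).toWord = p.toWord ++ q.toWord ∧
    t.toWord = p.toWord ++ w.toWord := by
  obtain ⟨P, W, Q, e1, e2, e3, e4⟩ :=
    exists_cancel t.toWord u.toWord (FreeGroup.reduce_toWord t) (FreeGroup.reduce_toWord u)
  have hct : List.Chain' NC t.toWord := chain'_of_reduce_eq (FreeGroup.reduce_toWord t)
  have hcu : List.Chain' NC u.toWord := chain'_of_reduce_eq (FreeGroup.reduce_toWord u)
  have hP : reduce P = P := reduce_eq_self_of_chain' _ (hct.prefix ⟨W, e1.symm⟩)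
  have hW : reduce W = W := reduce_eq_self_of_chain' _ (hct.suffix ⟨P, e1.symm⟩)
  have hQ : reduce Q = Q := reduce_eq_self_of_chain' _ (hcu.suffix ⟨invRev W, e2.symm⟩)
  have htu : (t * u).toWord = P ++ Q := by
    conv_lhs => rw [← FreeGroup.mk_toWord (x := t), ← FreeGroup.mk_toWord (x := u)]
    rw [FreeGroup.mul_mk, FreeGroup.toWord_mk, e3]
  refine ⟨FreeGroup.mk P, FreeGroup.mk W, FreeGroup.mk Q, ?_, ?_, ?_, ?_, ?_, ?_, ?_⟩
  · rw [FreeGroup.mul_mk, ← e1, FreeGroup.mk_toWord]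
  · rw [FreeGroup.inv_mk, FreeGroup.mul_mk, ← e2, FreeGroup.mk_toWord]
  · rw [norm_def, e1, List.length_append, norm_mk_of_reduced hP, norm_mk_of_reduced hW]
  · rw [norm_def, e2, List.length_append, norm_mk_of_reduced hW, norm_mk_of_reduced hQ,
      FreeGroup.invRev_length]
  · rw [norm_def, htu, List.length_append, norm_mk_of_reduced hP, norm_mk_of_reduced hQ]
  · rw [htu, toWord_mk_of_reduced hP, toWord_mk_of_reduced hQ]
  · rw [e1, toWord_mk_of_reduced hP, toWord_mk_of_reduced hW]

/-- If norms add, the words concatenate. -/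
lemma toWord_mul_of_norm_add {x y : FreeGroup α}
    (h : FreeGroup.norm (x * y) = FreeGroup.norm x + FreeGroup.norm y) :
    (x * y).toWord = x.toWord ++ y.toWord := by
  obtain ⟨p, w, q, e1, e2, e3, e4, e5, e6, _⟩ := split x y
  have hw : FreeGroup.norm w = 0 := by omega
  have hw1 : w = 1 := FreeGroup.norm_eq_zero.mp hw
  subst hw1
  rw [mul_one] at e1
  rw [inv_one, one_mul] at e2
  subst e1; subst e2
  exact e6



open Finset

/-- Sum comparison through an injection on nonzero terms. -/
lemma sum_le_sum_of_inj {ι κ : Type*} [DecidableEq ι] [DecidableEq κ]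
    (s : Finset ι) (t : Finset κ) (φ : ι → ℝ) (ψ : κ → ℝ)
    (hψ : ∀ y ∈ t, 0 ≤ ψ y) (e : ι → κ)
    (he : Set.InjOn e {x | x ∈ s ∧ φ x ≠ 0})
    (h : ∀ x ∈ s, φ x ≠ 0 → e x ∈ t ∧ φ x ≤ ψ (e x)) :
    ∑ x ∈ s, φ x ≤ ∑ y ∈ t, ψ y := by
  classical
  rw [← Finset.sum_filter_ne_zero]
  calc ∑ x ∈ s.filter (φ · ≠ 0), φ x
      ≤ ∑ x ∈ s.filter (φ · ≠ 0), ψ (e x) := by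
        refine Finset.sum_le_sum fun x hx => ?_
        rw [Finset.mem_filter] at hx
        exact (h x hx.1 hx.2).2
    _ = ∑ y ∈ (s.filter (φ · ≠ 0)).image e, ψ y := by
        rw [Finset.sum_image]
        intro a ha b hb hab
        rw [Finset.mem_coe, Finset.mem_filter] at ha hb
        exact he ⟨ha.1, ha.2⟩ ⟨hb.1, hb.2⟩ hab
    _ ≤ ∑ y ∈ t, ψ y := by
        refine Finset.sum_le_sum_of_subset_of_nonneg ?_ (fun y hy _ => hψ y hy)
        intro y hy
        rw [Finset.mem_image] at hy
        obtain ⟨x, hx, rfl⟩ := hy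
        rw [Finset.mem_filter] at hx
        exact (h x hx.1 hx.2).1

lemma add_rpow_le_rpow_add' {a b t : ℝ} (ha : 0 ≤ a) (hb : 0 ≤ b) (ht : 1 ≤ t) :
    a ^ t + b ^ t ≤ (a + b) ^ t := by
  have h := NNReal.add_rpow_le_rpow_add a.toNNReal b.toNNReal ht
  have h2 := NNReal.coe_le_coe.mpr h
  rw [NNReal.coe_add, NNReal.coe_rpow, NNReal.coe_rpow, NNReal.coe_rpow, NNReal.coe_add,
    Real.coe_toNNReal a ha, Real.coe_toNNReal b hb] at h2
  exact h2

/-- Superadditivity of `x ↦ x ^ t`, `1 ≤ t`, over finite sums of nonnegatives. -/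
lemma sum_rpow_le_rpow_sum {ι : Type*} {t : ℝ} (ht : 1 ≤ t) (s : Finset ι) (u : ι → ℝ)
    (hu : ∀ i ∈ s, 0 ≤ u i) :
    ∑ i ∈ s, u i ^ t ≤ (∑ i ∈ s, u i) ^ t := by
  classical
  induction s using Finset.cons_induction with
  | empty => simp [Real.zero_rpow (by linarith : t ≠ 0)]
  | cons a s ha ih =>
    rw [Finset.sum_cons, Finset.sum_cons]
    have h1 : ∑ i ∈ s, u i ^ t ≤ (∑ i ∈ s, u i) ^ t :=
      ih (fun i hi => hu i (Finset.mem_cons_of_mem hi))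
    have h2 : u a ^ t + (∑ i ∈ s, u i) ^ t ≤ (u a + ∑ i ∈ s, u i) ^ t :=
      add_rpow_le_rpow_add' (hu a (Finset.mem_cons_self a s))
        (Finset.sum_nonneg fun i hi => hu i (Finset.mem_cons_of_mem hi)) ht
    linarith

/-- Monotonicity of `ℓ^p` norms on finite sums: `p ≤ r` gives `‖·‖_r ≤ ‖·‖_p`. -/
lemma Lp_mono {ι : Type*} {p r : ℝ} (hp : 0 < p) (hpr : p ≤ r) (s : Finset ι) (u : ι → ℝ)
    (hu : ∀ i ∈ s, 0 ≤ u i) :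
    (∑ i ∈ s, u i ^ r) ^ (1 / r) ≤ (∑ i ∈ s, u i ^ p) ^ (1 / p) := by
  have hr : 0 < r := lt_of_lt_of_le hp hpr
  have hsnn : 0 ≤ ∑ i ∈ s, u i ^ p := Finset.sum_nonneg fun i hi => Real.rpow_nonneg (hu i hi) p
  have key : ∑ i ∈ s, u i ^ r ≤ (∑ i ∈ s, u i ^ p) ^ (r / p) := by
    have e : ∀ i ∈ s, u i ^ r = (u i ^ p) ^ (r / p) := by
      intro i hi
      rw [← Real.rpow_mul (hu i hi)]
      congr 1
      field_simp
    rw [Finset.sum_congr rfl e]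
    exact sum_rpow_le_rpow_sum ((one_le_div hp).mpr hpr) s _
      (fun i hi => Real.rpow_nonneg (hu i hi) p)
  calc (∑ i ∈ s, u i ^ r) ^ (1 / r)
      ≤ ((∑ i ∈ s, u i ^ p) ^ (r / p)) ^ (1 / r) := by
        refine Real.rpow_le_rpow ?_ key (by positivity)
        exact Finset.sum_nonneg fun i hi => Real.rpow_nonneg (hu i hi) r
    _ = (∑ i ∈ s, u i ^ p) ^ (1 / p) := by
        rw [← Real.rpow_mul hsnn]
        congr 1
        field_simp


/-- Minkowski inequality for a finite family. -/
lemma Lp_sum_le {ι μ : Type*} (S : Finset ι) (W : Finset μ) (F : μ → ι → ℝ)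
    (hF : ∀ w x, 0 ≤ F w x) {q : ℝ} (hq : 1 ≤ q) :
    (∑ x ∈ S, (∑ w ∈ W, F w x) ^ q) ^ (1 / q) ≤
      ∑ w ∈ W, (∑ x ∈ S, F w x ^ q) ^ (1 / q) := by
  classical
  have hq0 : q ≠ 0 := by linarith
  induction W using Finset.cons_induction with
  | empty => simp [Real.zero_rpow hq0, Real.zero_rpow (inv_ne_zero hq0)]
  | cons a W ha ih =>
    simp only [Finset.sum_cons]
    calc (∑ x ∈ S, (F a x + ∑ w ∈ W, F w x) ^ q) ^ (1 / q)
        ≤ (∑ x ∈ S, F a x ^ q) ^ (1 / q) + (∑ x ∈ S, (∑ w ∈ W, F w x) ^ q) ^ (1 / q) :=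
          Real.Lp_add_le_of_nonneg S hq (fun x _ => hF a x)
            (fun x _ => Finset.sum_nonneg fun w _ => hF w x)
      _ ≤ (∑ x ∈ S, F a x ^ q) ^ (1 / q) + ∑ w ∈ W, (∑ x ∈ S, F w x ^ q) ^ (1 / q) := by
          linarith [ih]

lemma rpow_inv_rpow' {x q : ℝ} (hx : 0 ≤ x) (hq : q ≠ 0) : (x ^ (1 / q)) ^ q = x := by
  rw [← Real.rpow_mul hx, one_div, inv_mul_cancel₀ hq, Real.rpow_one]

lemma rpow_rpow_inv' {x q : ℝ} (hx : 0 ≤ x) (hq : q ≠ 0) : (x ^ q) ^ (1 / q) = x := by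
  rw [← Real.rpow_mul hx, mul_one_div, div_self hq, Real.rpow_one]

lemma le_of_rpow_le {x y q : ℝ} (hx : 0 ≤ x) (hy : 0 ≤ y) (hq : 0 < q)
    (h : x ^ q ≤ y ^ q) : x ≤ y := by
  have h2 := Real.rpow_le_rpow (Real.rpow_nonneg hx q) h (le_of_lt (one_div_pos.mpr hq))
  rwa [rpow_rpow_inv' hx (ne_of_gt hq), rpow_rpow_inv' hy (ne_of_gt hq)] at h2

/-- The key abstract matrix inequality, for `1 < q ≤ 2`. -/
lemma matrix_ineq {ι κ μ : Type*} (P : Finset ι) (Q : Finset κ) (W : Finset μ)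
    (a : ι → μ → ℝ) (b : μ → κ → ℝ) (ha : ∀ p w, 0 ≤ a p w) (hb : ∀ w c, 0 ≤ b w c)
    {q : ℝ} (hq1 : 1 < q) (hq2 : q ≤ 2) :
    ∑ p ∈ P, ∑ c ∈ Q, (∑ w ∈ W, a p w * b w c) ^ q ≤
      (∑ p ∈ P, ∑ w ∈ W, a p w ^ q) * (∑ w ∈ W, ∑ c ∈ Q, b w c ^ q) := by
  classical
  have hq0 : (0 : ℝ) < q := by linarith
  have hqne : q ≠ 0 := ne_of_gt hq0
  set A : μ → ℝ := fun w => (∑ p ∈ P, a p w ^ q) ^ (1 / q) with hA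
  set B : μ → ℝ := fun w => (∑ c ∈ Q, b w c ^ q) ^ (1 / q) with hB
  have hAnn : ∀ w, 0 ≤ A w := fun w => Real.rpow_nonneg
    (Finset.sum_nonneg fun p _ => Real.rpow_nonneg (ha p w) q) _
  have hBnn : ∀ w, 0 ≤ B w := fun w => Real.rpow_nonneg
    (Finset.sum_nonneg fun c _ => Real.rpow_nonneg (hb w c) q) _
  have hLHSnn : 0 ≤ ∑ p ∈ P, ∑ c ∈ Q, (∑ w ∈ W, a p w * b w c) ^ q :=
    Finset.sum_nonneg fun p _ => Finset.sum_nonneg fun c _ => Real.rpow_nonneg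
      (Finset.sum_nonneg fun w _ => mul_nonneg (ha p w) (hb w c)) q
  -- Step 1 : Minkowski
  have step1 : (∑ p ∈ P, ∑ c ∈ Q, (∑ w ∈ W, a p w * b w c) ^ q) ^ (1 / q) ≤
      ∑ w ∈ W, A w * B w := by
    have := Lp_sum_le (P ×ˢ Q) W (fun w x => a x.1 w * b w x.2)
      (fun w x => mul_nonneg (ha x.1 w) (hb w x.2)) (le_of_lt hq1)
    rw [Finset.sum_product] at this
    refine le_trans this (le_of_eq (Finset.sum_congr rfl fun w _ => ?_))
    have e : ∑ x ∈ P ×ˢ Q, (a x.1 w * b w x.2) ^ q =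
        (∑ p ∈ P, a p w ^ q) * (∑ c ∈ Q, b w c ^ q) := by
      rw [Finset.sum_mul_sum, Finset.sum_product]
      exact Finset.sum_congr rfl fun p _ => Finset.sum_congr rfl fun c _ =>
        Real.mul_rpow (ha p w) (hb w c)
    rw [e, hA, hB, ← Real.mul_rpow
      (Finset.sum_nonneg fun p _ => Real.rpow_nonneg (ha p w) q)
      (Finset.sum_nonneg fun c _ => Real.rpow_nonneg (hb w c) q)]
  -- Step 2 : Hölder
  have hpq : q.HolderConjugate (q.conjExponent) := Real.HolderConjugate.conjExponent hq1
  have step2 : ∑ w ∈ W, A w * B w ≤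
      (∑ w ∈ W, A w ^ q) ^ (1 / q) * (∑ w ∈ W, B w ^ q.conjExponent) ^ (1 / q.conjExponent) :=
    Real.inner_le_Lp_mul_Lq_of_nonneg W hpq (fun w _ => hAnn w) (fun w _ => hBnn w)
  -- Step 3 : ℓ^{q'} ≤ ℓ^q on W
  have hqq' : q ≤ q.conjExponent := by
    rw [Real.conjExponent, le_div_iff₀ (by linarith)]
    nlinarith
  have step3 : (∑ w ∈ W, B w ^ q.conjExponent) ^ (1 / q.conjExponent) ≤
      (∑ w ∈ W, B w ^ q) ^ (1 / q) :=
    Lp_mono hq0 hqq' W B (fun w _ => hBnn w)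
  have hAq : ∑ w ∈ W, A w ^ q = ∑ w ∈ W, ∑ p ∈ P, a p w ^ q :=
    Finset.sum_congr rfl fun w _ => rpow_inv_rpow'
      (Finset.sum_nonneg fun p _ => Real.rpow_nonneg (ha p w) q) hqne
  have hBq : ∑ w ∈ W, B w ^ q = ∑ w ∈ W, ∑ c ∈ Q, b w c ^ q :=
    Finset.sum_congr rfl fun w _ => rpow_inv_rpow'
      (Finset.sum_nonneg fun c _ => Real.rpow_nonneg (hb w c) q) hqne
  have hAnn' : 0 ≤ ∑ w ∈ W, ∑ p ∈ P, a p w ^ q :=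
    Finset.sum_nonneg fun w _ => Finset.sum_nonneg fun p _ => Real.rpow_nonneg (ha p w) q
  have hBnn' : 0 ≤ ∑ w ∈ W, ∑ c ∈ Q, b w c ^ q :=
    Finset.sum_nonneg fun w _ => Finset.sum_nonneg fun c _ => Real.rpow_nonneg (hb w c) q
  have total : (∑ p ∈ P, ∑ c ∈ Q, (∑ w ∈ W, a p w * b w c) ^ q) ^ (1 / q) ≤
      ((∑ w ∈ W, ∑ p ∈ P, a p w ^ q) * (∑ w ∈ W, ∑ c ∈ Q, b w c ^ q)) ^ (1 / q) := by
    calc (∑ p ∈ P, ∑ c ∈ Q, (∑ w ∈ W, a p w * b w c) ^ q) ^ (1 / q)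
        ≤ ∑ w ∈ W, A w * B w := step1
      _ ≤ (∑ w ∈ W, A w ^ q) ^ (1 / q) * (∑ w ∈ W, B w ^ q.conjExponent) ^ (1 / q.conjExponent) :=
          step2
      _ ≤ (∑ w ∈ W, A w ^ q) ^ (1 / q) * (∑ w ∈ W, B w ^ q) ^ (1 / q) := by
          refine mul_le_mul_of_nonneg_left step3 (Real.rpow_nonneg ?_ _)
          exact Finset.sum_nonneg fun w _ => Real.rpow_nonneg (hAnn w) q
      _ = ((∑ w ∈ W, ∑ p ∈ P, a p w ^ q) * (∑ w ∈ W, ∑ c ∈ Q, b w c ^ q)) ^ (1 / q) := by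
          rw [hAq, hBq, Real.mul_rpow hAnn' hBnn']
  have final := Real.rpow_le_rpow (Real.rpow_nonneg hLHSnn _) total (le_of_lt hq0)
  rw [rpow_inv_rpow' hLHSnn hqne, rpow_inv_rpow' (mul_nonneg hAnn' hBnn') hqne] at final
  calc ∑ p ∈ P, ∑ c ∈ Q, (∑ w ∈ W, a p w * b w c) ^ q
      ≤ (∑ w ∈ W, ∑ p ∈ P, a p w ^ q) * (∑ w ∈ W, ∑ c ∈ Q, b w c ^ q) := final
    _ = (∑ p ∈ P, ∑ w ∈ W, a p w ^ q) * (∑ w ∈ W, ∑ c ∈ Q, b w c ^ q) := by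
        rw [Finset.sum_comm]



section LqBasic
variable {G : Type*} {q : ℝ}

lemma lqNorm_nonneg (h : G → ℂ) : 0 ≤ lqNorm q h :=
  Real.rpow_nonneg (tsum_nonneg fun s => Real.rpow_nonneg (norm_nonneg _) q) _

lemma lqNorm_eq_sum (hq : 0 < q) {h : G → ℂ} (A : Finset G)
    (hA : ∀ s, h s ≠ 0 → s ∈ A) :
    lqNorm q h = (∑ s ∈ A, ‖h s‖ ^ q) ^ (1 / q) := by
  unfold lqNorm
  congr 1
  refine tsum_eq_sum fun s hs => ?_
  have : h s = 0 := by by_contra hc; exact hs (hA s hc)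
  rw [this, norm_zero, Real.zero_rpow (ne_of_gt hq)]

lemma lqNorm_pow_eq_sum (hq : 0 < q) {h : G → ℂ} (A : Finset G)
    (hA : ∀ s, h s ≠ 0 → s ∈ A) :
    (lqNorm q h) ^ q = ∑ s ∈ A, ‖h s‖ ^ q := by
  rw [lqNorm_eq_sum hq A hA, rpow_inv_rpow'
    (Finset.sum_nonneg fun s _ => Real.rpow_nonneg (norm_nonneg _) q) (ne_of_gt hq)]

lemma lqNorm_zero (hq : 0 < q) {h : G → ℂ} (hh : ∀ s, h s = 0) : lqNorm q h = 0 := by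
  rw [lqNorm_eq_sum hq (∅ : Finset G) (fun s hs => absurd (hh s) hs), Finset.sum_empty,
    Real.zero_rpow (one_div_ne_zero (ne_of_gt hq))]

end LqBasic

section ConvBasic
variable {G : Type*} [Group G]

lemma conv_eq_sum (f g : G → ℂ) (F : Finset G) (hF : ∀ t, f t ≠ 0 → t ∈ F) (s : G) :
    conv f g s = ∑ t ∈ F, f t * g (t⁻¹ * s) := by
  refine tsum_eq_sum fun t ht => ?_
  have : f t = 0 := by by_contra hc; exact ht (hF t hc)
  rw [this, zero_mul]

lemma conv_ne_zero {f g : G → ℂ} {s : G} (h : conv f g s ≠ 0) :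
    ∃ t, f t ≠ 0 ∧ g (t⁻¹ * s) ≠ 0 := by
  by_contra hc
  push_neg at hc
  apply h
  have : ∀ t : G, f t * g (t⁻¹ * s) = 0 := by
    intro t
    rcases eq_or_ne (f t) 0 with h1 | h1
    · rw [h1, zero_mul]
    · rw [hc t h1, mul_zero]
  unfold conv
  rw [tsum_congr (fun t => this t), tsum_zero]

lemma support_conv_subset [DecidableEq G] {f g : G → ℂ} (hf : (Function.support f).Finite)
    (hg : (Function.support g).Finite) :
    ∀ s, conv f g s ≠ 0 → s ∈ Finset.image₂ (· * ·) hf.toFinset hg.toFinset := by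
  classical
  intro s hs
  obtain ⟨t, ht, hu⟩ := conv_ne_zero hs
  have : s = t * (t⁻¹ * s) := by group
  rw [this]
  exact Finset.mem_image₂_of_mem (by simpa using ht) (by simpa using hu)

lemma support_conv_finite {f g : G → ℂ} (hf : (Function.support f).Finite)
    (hg : (Function.support g).Finite) : (Function.support (conv f g)).Finite := by
  classical
  refine Set.Finite.subset (Finset.image₂ (· * ·) hf.toFinset hg.toFinset).finite_toSet ?_
  intro s hs
  exact support_conv_subset hf hg s hs

lemma conv_sum {ι : Type*} (f : G → ℂ) (hf : (Function.support f).Finite)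
    (I : Finset ι) (g : ι → G → ℂ) :
    conv f (∑ i ∈ I, g i) = ∑ i ∈ I, conv f (g i) := by
  classical
  funext s
  rw [Finset.sum_apply]
  rw [conv_eq_sum f _ hf.toFinset (fun t ht => by simpa using ht) s]
  have : ∀ i ∈ I, conv f (g i) s = ∑ t ∈ hf.toFinset, f t * g i (t⁻¹ * s) :=
    fun i _ => conv_eq_sum f (g i) hf.toFinset (fun t ht => by simpa using ht) s
  rw [Finset.sum_congr rfl this, Finset.sum_comm]
  refine Finset.sum_congr rfl fun t _ => ?_
  rw [Finset.sum_apply, Finset.mul_sum]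

lemma conv_assoc {u v h : G → ℂ} (hu : (Function.support u).Finite)
    (hv : (Function.support v).Finite) :
    conv (conv u v) h = conv u (conv v h) := by
  classical
  funext s
  have hcv : (Function.support (conv u v)).Finite := support_conv_finite hu hv
  set A := Finset.image₂ (· * ·) hu.toFinset hv.toFinset with hA
  have lhs_eq : conv (conv u v) h s =
      ∑ x ∈ A, (∑ t ∈ hu.toFinset, u t * v (t⁻¹ * x)) * h (x⁻¹ * s) := by
    rw [conv_eq_sum (conv u v) h A (support_conv_subset hu hv) s]
    exact Finset.sum_congr rfl fun x _ => by
      rw [conv_eq_sum u v hu.toFinset (fun t ht => by simpa using ht) x]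
  have rhs_eq : conv u (conv v h) s =
      ∑ t ∈ hu.toFinset, ∑ r ∈ hv.toFinset, u t * (v r * h (r⁻¹ * (t⁻¹ * s))) := by
    rw [conv_eq_sum u (conv v h) hu.toFinset (fun t ht => by simpa using ht) s]
    refine Finset.sum_congr rfl fun t _ => ?_
    rw [conv_eq_sum v h hv.toFinset (fun r hr => by simpa using hr) (t⁻¹ * s),
      Finset.mul_sum]
  rw [lhs_eq, rhs_eq]
  calc ∑ x ∈ A, (∑ t ∈ hu.toFinset, u t * v (t⁻¹ * x)) * h (x⁻¹ * s)
      = ∑ x ∈ A, ∑ t ∈ hu.toFinset, u t * v (t⁻¹ * x) * h (x⁻¹ * s) :=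
        Finset.sum_congr rfl fun x _ => Finset.sum_mul _ _ _
    _ = ∑ t ∈ hu.toFinset, ∑ x ∈ A, u t * v (t⁻¹ * x) * h (x⁻¹ * s) := Finset.sum_comm
    _ = ∑ t ∈ hu.toFinset, ∑ r ∈ hv.toFinset, u t * (v r * h (r⁻¹ * (t⁻¹ * s))) := by
        refine Finset.sum_congr rfl fun t ht => ?_
        refine Finset.sum_bij_ne_zero (fun x _ _ => t⁻¹ * x) ?_ ?_ ?_ ?_
        · intro x hx hne
          have hv' : v (t⁻¹ * x) ≠ 0 := fun hc => hne (by rw [hc, mul_zero, zero_mul])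
          simpa using hv'
        · intro x hx h1 x' hx' h2 hee
          have hee' : t⁻¹ * x = t⁻¹ * x' := hee
          exact mul_left_cancel hee'
        · intro r hr hne
          refine ⟨t * r, Finset.mem_image₂_of_mem ht hr, ?_, by group⟩
          have : u t * v (t⁻¹ * (t * r)) * h ((t * r)⁻¹ * s) =
              u t * (v r * h (r⁻¹ * (t⁻¹ * s))) := by
            have e1 : t⁻¹ * (t * r) = r := by group
            have e2 : (t * r)⁻¹ * s = r⁻¹ * (t⁻¹ * s) := by group
            rw [e1, e2, mul_assoc]
          rw [this]
          exact hne
        · intro x hx hne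
          have e2 : (t⁻¹ * x)⁻¹ * (t⁻¹ * s) = x⁻¹ * s := by group
          rw [e2, mul_assoc]

end ConvBasic

section Fstar
variable {G : Type*} [Group G] {q : ℝ}

lemma fstar_ne_zero_iff {f : G → ℂ} {t : G} : fstar f t ≠ 0 ↔ f t⁻¹ ≠ 0 := by
  unfold fstar
  simp

lemma support_fstar_finite {f : G → ℂ} (hf : (Function.support f).Finite) :
    (Function.support (fstar f)).Finite := by
  have : Function.support (fstar f) ⊆ Inv.inv ⁻¹' (Function.support f) := by
    intro t ht
    simpa using fstar_ne_zero_iff.mp ht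
  exact Set.Finite.subset (Set.Finite.preimage (inv_injective.injOn) hf) this

lemma lqNorm_fstar (f : G → ℂ) : lqNorm q (fstar f) = lqNorm q f := by
  unfold lqNorm fstar
  congr 1
  have : ∀ s : G, ‖(starRingEnd ℂ) (f s⁻¹)‖ ^ q = ‖f s⁻¹‖ ^ q := by
    intro s
    rw [RCLike.norm_conj]
  rw [tsum_congr this]
  exact Equiv.tsum_eq (Equiv.inv G) (fun s => ‖f s‖ ^ q)

lemma conv_convPow_zero (h : G → ℂ) : convPow h 1 = h := by
  show conv h (convPow h 0) = h
  funext s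
  unfold conv convPow
  rw [tsum_eq_single s]
  · simp
  · intro t ht
    have hne : ¬ (t⁻¹ * s = 1) := by
      intro hc
      exact ht (inv_mul_eq_one.mp hc)
    rw [if_neg hne, mul_zero]

end Fstar


section Spheres
variable {β : Type*} [Fintype β] [DecidableEq β] {q : ℝ}

/-- The finset of elements of the free group of norm `r` (as a subset of an image). -/
noncomputable def sph (β : Type*) [Fintype β] [DecidableEq β] (r : ℕ) : Finset (FreeGroup β) :=
  (Finset.image (fun v : Fin r → β × Bool => FreeGroup.mk (List.ofFn v))
    Finset.univ).filter (fun x => FreeGroup.norm x = r)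

lemma norm_of_mem_sph {x : FreeGroup β} {r : ℕ} (h : x ∈ sph β r) : FreeGroup.norm x = r :=
  (Finset.mem_filter.mp h).2

lemma mem_sph_of_norm {x : FreeGroup β} {r : ℕ} (h : FreeGroup.norm x = r) : x ∈ sph β r := by
  rw [sph, Finset.mem_filter]
  refine ⟨?_, h⟩
  rw [Finset.mem_image]
  have hlen : x.toWord.length = r := h
  refine ⟨fun i => x.toWord.get (Fin.cast hlen.symm i), Finset.mem_univ _, ?_⟩
  have e : List.ofFn (fun i => x.toWord.get (Fin.cast hlen.symm i)) = x.toWord := by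
    apply List.ext_getElem
    · simp [hlen]
    · intro n h1 h2
      simp [List.getElem_ofFn]
  rw [e, FreeGroup.mk_toWord]

/-- Restriction of a function to the sphere of radius `L`. -/
noncomputable def sphRestrict (L : ℕ) (h : FreeGroup β → ℂ) : FreeGroup β → ℂ :=
  fun s => if FreeGroup.norm s = L then h s else 0

lemma sphRestrict_ne_zero {L : ℕ} {h : FreeGroup β → ℂ} {s : FreeGroup β}
    (hs : sphRestrict L h s ≠ 0) : h s ≠ 0 ∧ FreeGroup.norm s = L := by
  by_cases hc : FreeGroup.norm s = L
  · refine ⟨?_, hc⟩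
    simpa [sphRestrict, hc] using hs
  · simp [sphRestrict, hc] at hs

lemma support_sphRestrict_finite {L : ℕ} {h : FreeGroup β → ℂ}
    (hh : (Function.support h).Finite) : (Function.support (sphRestrict L h)).Finite :=
  hh.subset fun s hs => (sphRestrict_ne_zero hs).1

lemma eq_sum_sphRestrict {h : FreeGroup β → ℂ} (M : Finset ℕ)
    (hM : ∀ s, h s ≠ 0 → FreeGroup.norm s ∈ M) :
    h = ∑ L ∈ M, sphRestrict L h := by
  funext s
  rw [Finset.sum_apply]
  unfold sphRestrict
  rw [Finset.sum_ite_eq M (FreeGroup.norm s) (fun _ => h s)]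
  by_cases hc : FreeGroup.norm s ∈ M
  · rw [if_pos hc]
  · rw [if_neg hc]
    by_contra hzero
    exact hc (hM s hzero)

/-- The sum over spheres of the `ℓ^q`-norms of the restrictions. -/
noncomputable def sNq (q : ℝ) (h : FreeGroup β → ℂ) : ℝ :=
  ∑' L : ℕ, lqNorm q (sphRestrict L h)

lemma sNq_eq_sum (hq : 0 < q) {h : FreeGroup β → ℂ} (M : Finset ℕ)
    (hM : ∀ s, h s ≠ 0 → FreeGroup.norm s ∈ M) :
    sNq q h = ∑ L ∈ M, lqNorm q (sphRestrict L h) := by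
  refine tsum_eq_sum fun L hL => ?_
  refine lqNorm_zero hq fun s => ?_
  by_contra hs
  obtain ⟨h1, h2⟩ := sphRestrict_ne_zero hs
  exact hL (h2 ▸ hM s h1)

lemma sNq_nonneg (h : FreeGroup β → ℂ) : 0 ≤ sNq q h :=
  tsum_nonneg fun L => lqNorm_nonneg _

lemma sNq_single (hq : 0 < q) {k : ℕ} {h : FreeGroup β → ℂ}
    (hk : ∀ s, h s ≠ 0 → FreeGroup.norm s = k) : sNq q h = lqNorm q h := by
  rw [sNq_eq_sum hq {k} (fun s hs => Finset.mem_singleton.mpr (hk s hs)),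
    Finset.sum_singleton]
  congr 1
  funext s
  unfold sphRestrict
  by_cases hc : FreeGroup.norm s = k
  · rw [if_pos hc]
  · rw [if_neg hc]
    by_contra hzero
    exact hc (hk s (fun he => hzero he.symm))

lemma lqNorm_le_sNq (hq : 1 ≤ q) {h : FreeGroup β → ℂ}
    (hh : (Function.support h).Finite) : lqNorm q h ≤ sNq q h := by
  classical
  have hq0 : (0 : ℝ) < q := lt_of_lt_of_le one_pos hq
  set T := hh.toFinset with hT
  set M := T.image FreeGroup.norm with hM
  have hMs : ∀ s, h s ≠ 0 → FreeGroup.norm s ∈ M := fun s hs =>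
    Finset.mem_image_of_mem _ (by simpa [hT] using hs)
  have key : (lqNorm q h) ^ q = ∑ L ∈ M, (lqNorm q (sphRestrict L h)) ^ q := by
    rw [lqNorm_pow_eq_sum hq0 T (fun s hs => by simpa [hT] using hs)]
    rw [← Finset.sum_fiberwise_of_maps_to (g := FreeGroup.norm) (t := M)
      (fun s hs => Finset.mem_image_of_mem _ hs)]
    refine Finset.sum_congr rfl fun L hL => ?_
    rw [lqNorm_pow_eq_sum hq0 (T.filter (fun s => FreeGroup.norm s = L))
      (fun s hs => Finset.mem_filter.mpr ⟨by simpa [hT] using (sphRestrict_ne_zero hs).1,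
        (sphRestrict_ne_zero hs).2⟩)]
    refine Finset.sum_congr rfl fun s hs => ?_
    have := (Finset.mem_filter.mp hs).2
    rw [sphRestrict, if_pos this]
  have h2 : ∑ L ∈ M, (lqNorm q (sphRestrict L h)) ^ q ≤
      (∑ L ∈ M, lqNorm q (sphRestrict L h)) ^ q :=
    sum_rpow_le_rpow_sum hq M _ (fun L _ => lqNorm_nonneg _)
  have h3 : (lqNorm q h) ^ q ≤ (∑ L ∈ M, lqNorm q (sphRestrict L h)) ^ q := key ▸ h2
  have h4 := Real.rpow_le_rpow (Real.rpow_nonneg (lqNorm_nonneg h) q) h3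
    (le_of_lt (one_div_pos.mpr hq0))
  rw [rpow_rpow_inv' (lqNorm_nonneg h) (ne_of_gt hq0),
    rpow_rpow_inv' (Finset.sum_nonneg fun L _ => lqNorm_nonneg _) (ne_of_gt hq0)] at h4
  rw [sNq_eq_sum hq0 M hMs]
  exact h4

end Spheres

section Piece
variable {β : Type*} [Fintype β] [DecidableEq β] {q : ℝ}

/-- Prefix coordinate of `s` (of length `n`). -/
noncomputable def pref (n : ℕ) (s : FreeGroup β) : FreeGroup β :=
  FreeGroup.mk (s.toWord.take n)

/-- Suffix coordinate of `s` (dropping `n`). -/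
noncomputable def suff (n : ℕ) (s : FreeGroup β) : FreeGroup β :=
  FreeGroup.mk (s.toWord.drop n)

lemma pref_mul_suff (n : ℕ) (s : FreeGroup β) : pref n s * suff n s = s := by
  rw [pref, suff, FreeGroup.mul_mk, List.take_append_drop, FreeGroup.mk_toWord]

lemma toWord_pref (n : ℕ) (s : FreeGroup β) : (pref n s).toWord = s.toWord.take n :=
  toWord_mk_of_reduced (reduce_eq_self_of_chain' _
    ((chain'_of_reduce_eq (FreeGroup.reduce_toWord s)).take n))

lemma toWord_suff (n : ℕ) (s : FreeGroup β) : (suff n s).toWord = s.toWord.drop n :=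
  toWord_mk_of_reduced (reduce_eq_self_of_chain' _
    ((chain'_of_reduce_eq (FreeGroup.reduce_toWord s)).drop n))

lemma pref_eq_of_split {s p qq : FreeGroup β} (h : s.toWord = p.toWord ++ qq.toWord)
    {n : ℕ} (hn : FreeGroup.norm p = n) : pref n s = p := by
  rw [pref, h, List.take_left' hn, FreeGroup.mk_toWord]

lemma suff_eq_of_split {s p qq : FreeGroup β} (h : s.toWord = p.toWord ++ qq.toWord)
    {n : ℕ} (hn : FreeGroup.norm p = n) : suff n s = qq := by
  rw [suff, h, List.drop_left' hn, FreeGroup.mk_toWord]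

/-- The piece lemma: restriction of a convolution of sphere-supported functions to
a sphere is bounded by the product of `ℓ^q` norms. -/
lemma piece (hq1 : 1 < q) (hq2 : q ≤ 2) {k m j : ℕ} (hjk : j ≤ k) (hjm : j ≤ m)
    {f g : FreeGroup β → ℂ}
    (hf : (Function.support f).Finite) (hg : (Function.support g).Finite)
    (hfk : ∀ t, f t ≠ 0 → FreeGroup.norm t = k)
    (hgm : ∀ t, g t ≠ 0 → FreeGroup.norm t = m) :
    lqNorm q (sphRestrict ((k - j) + (m - j)) (conv f g)) ≤ lqNorm q f * lqNorm q g := by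
  classical
  have hq0 : (0 : ℝ) < q := lt_trans one_pos hq1
  set L := (k - j) + (m - j) with hL
  set F := hf.toFinset with hF
  set Gg := hg.toFinset with hGg
  set A := Finset.image₂ (· * ·) F Gg with hA
  set AL := A.filter (fun s => FreeGroup.norm s = L) with hAL
  have hsupp : ∀ s, sphRestrict L (conv f g) s ≠ 0 → s ∈ AL := by
    intro s hs
    obtain ⟨h1, h2⟩ := sphRestrict_ne_zero hs
    exact Finset.mem_filter.mpr ⟨support_conv_subset hf hg s h1, h2⟩
  -- the q-th power of the lhs as a finite sum
  have lhs_pow : (lqNorm q (sphRestrict L (conv f g))) ^ q =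
      ∑ s ∈ AL, ‖conv f g s‖ ^ q := by
    rw [lqNorm_pow_eq_sum hq0 AL hsupp]
    refine Finset.sum_congr rfl fun s hs => ?_
    rw [sphRestrict, if_pos (Finset.mem_filter.mp hs).2]
  -- pointwise bound
  have point : ∀ s ∈ AL, ‖conv f g s‖ ≤
      ∑ w ∈ sph β j, ‖f (pref (k - j) s * w)‖ * ‖g (w⁻¹ * suff (k - j) s)‖ := by
    intro s hs
    have hsL : FreeGroup.norm s = L := (Finset.mem_filter.mp hs).2
    rw [conv_eq_sum f g F (fun t ht => by simpa [hF] using ht) s]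
    refine le_trans (norm_sum_le _ _) ?_
    have e1 : ∀ t ∈ F, ‖f t * g (t⁻¹ * s)‖ = ‖f t‖ * ‖g (t⁻¹ * s)‖ :=
      fun t _ => norm_mul _ _
    rw [Finset.sum_congr rfl e1]
    refine sum_le_sum_of_inj F (sph β j) _ _
      (fun w _ => mul_nonneg (norm_nonneg _) (norm_nonneg _))
      (fun t => (pref (k - j) s)⁻¹ * t)
      (fun t _ t' _ hee => mul_left_cancel hee) ?_
    intro t htF hφ
    have hft : f t ≠ 0 := by
      intro hc
      rw [hc, norm_zero, zero_mul] at hφ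
      exact hφ rfl
    have hgt : g (t⁻¹ * s) ≠ 0 := by
      intro hc
      rw [hc, norm_zero, mul_zero] at hφ
      exact hφ rfl
    obtain ⟨p, w, qq, e1', e2', n1, n2, n3, tw1, -⟩ := split t (t⁻¹ * s)
    have hts : t * (t⁻¹ * s) = s := by group
    rw [hts] at n3 tw1
    have hnt : FreeGroup.norm t = k := hfk t hft
    have hnu : FreeGroup.norm (t⁻¹ * s) = m := hgm _ hgt
    have hw : FreeGroup.norm w = j ∧ FreeGroup.norm p = k - j := by omega
    have hp : pref (k - j) s = p := pref_eq_of_split tw1 hw.2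
    have hqq : suff (k - j) s = qq := suff_eq_of_split tw1 hw.2
    have het : (pref (k - j) s)⁻¹ * t = w := by
      rw [hp, e1', inv_mul_cancel_left]
    refine ⟨?_, ?_⟩
    · show (pref (k - j) s)⁻¹ * t ∈ sph β j
      rw [het]
      exact mem_sph_of_norm hw.1
    · show ‖f t‖ * ‖g (t⁻¹ * s)‖ ≤
        ‖f (pref (k - j) s * ((pref (k - j) s)⁻¹ * t))‖ *
          ‖g (((pref (k - j) s)⁻¹ * t)⁻¹ * suff (k - j) s)‖
      rw [mul_inv_cancel_left, het, hqq, ← e2']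
  -- injection of AL into the product of spheres
  have step2 : ∑ s ∈ AL, ‖conv f g s‖ ^ q ≤
      ∑ x ∈ (sph β (k - j)) ×ˢ (sph β (m - j)),
        (∑ w ∈ sph β j, ‖f (x.1 * w)‖ * ‖g (w⁻¹ * x.2)‖) ^ q := by
    refine sum_le_sum_of_inj AL _ _ _
      (fun x _ => Real.rpow_nonneg (Finset.sum_nonneg fun w _ =>
        mul_nonneg (norm_nonneg _) (norm_nonneg _)) q)
      (fun s => (pref (k - j) s, suff (k - j) s)) ?_ ?_
    · intro s hs s' hs' hee
      have h1 : pref (k - j) s = pref (k - j) s' := congrArg Prod.fst hee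
      have h2 : suff (k - j) s = suff (k - j) s' := congrArg Prod.snd hee
      rw [← pref_mul_suff (k - j) s, ← pref_mul_suff (k - j) s', h1, h2]
    · intro s hs _
      have hsL : FreeGroup.norm s = L := (Finset.mem_filter.mp hs).2
      have hlen : s.toWord.length = L := hsL
      constructor
      · rw [Finset.mem_product]
        constructor
        · refine mem_sph_of_norm ?_
          rw [norm_def, toWord_pref, List.length_take, hlen]
          omega
        · refine mem_sph_of_norm ?_
          rw [norm_def, toWord_suff, List.length_drop, hlen]
          omega
      · exact Real.rpow_le_rpow (norm_nonneg _) (point s hs) (le_of_lt hq0)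
  -- matrix inequality
  have step3 : ∑ x ∈ (sph β (k - j)) ×ˢ (sph β (m - j)),
        (∑ w ∈ sph β j, ‖f (x.1 * w)‖ * ‖g (w⁻¹ * x.2)‖) ^ q ≤
      (∑ p ∈ sph β (k - j), ∑ w ∈ sph β j, ‖f (p * w)‖ ^ q) *
        (∑ w ∈ sph β j, ∑ c ∈ sph β (m - j), ‖g (w⁻¹ * c)‖ ^ q) := by
    rw [Finset.sum_product]
    exact matrix_ineq _ _ _ (fun p w => ‖f (p * w)‖) (fun w c => ‖g (w⁻¹ * c)‖)
      (fun _ _ => norm_nonneg _) (fun _ _ => norm_nonneg _) hq1 hq2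
  -- the `a`-sum is at most `‖f‖_q^q`
  have step4 : ∑ p ∈ sph β (k - j), ∑ w ∈ sph β j, ‖f (p * w)‖ ^ q ≤ (lqNorm q f) ^ q := by
    rw [lqNorm_pow_eq_sum hq0 F (fun t ht => by simpa [hF] using ht), ← Finset.sum_product']
    refine sum_le_sum_of_inj _ F _ _ (fun t _ => Real.rpow_nonneg (norm_nonneg _) q)
      (fun x => x.1 * x.2) ?_ ?_
    · rintro ⟨p, w⟩ ⟨hx, hφ⟩ ⟨p', w'⟩ ⟨hx', hφ'⟩ hee
      simp only [Finset.mem_product] at hx hx'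
      have key : ∀ (p₀ w₀ : FreeGroup β), p₀ ∈ sph β (k - j) → w₀ ∈ sph β j →
          f (p₀ * w₀) ≠ 0 → pref (k - j) (p₀ * w₀) = p₀ := by
        intro p₀ w₀ hp₀ hw₀ hne
        have hnp : FreeGroup.norm p₀ = k - j := norm_of_mem_sph hp₀
        have hnw : FreeGroup.norm w₀ = j := norm_of_mem_sph hw₀
        have hnm : FreeGroup.norm (p₀ * w₀) = FreeGroup.norm p₀ + FreeGroup.norm w₀ := by
          rw [hfk _ hne, hnp, hnw]
          omega
        exact pref_eq_of_split (toWord_mul_of_norm_add hnm) hnp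
      have hfne : f (p * w) ≠ 0 := by
        intro hc
        rw [hc, norm_zero, Real.zero_rpow (ne_of_gt hq0)] at hφ
        exact hφ rfl
      have hfne' : f (p' * w') ≠ 0 := by
        intro hc
        rw [hc, norm_zero, Real.zero_rpow (ne_of_gt hq0)] at hφ'
        exact hφ' rfl
      have hee' : p * w = p' * w' := hee
      have hpp : p = p' := by
        rw [← key p w hx.1 hx.2 hfne, ← key p' w' hx'.1 hx'.2 hfne', hee']
      refine Prod.ext hpp ?_
      rw [hpp] at hee'
      exact mul_left_cancel hee'
    · rintro ⟨p, w⟩ hx hφ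
      have hfne : f (p * w) ≠ 0 := by
        intro hc
        rw [hc, norm_zero, Real.zero_rpow (ne_of_gt hq0)] at hφ
        exact hφ rfl
      exact ⟨by simpa [hF] using hfne, le_refl _⟩
  -- the `b`-sum is at most `‖g‖_q^q`
  have step5 : ∑ w ∈ sph β j, ∑ c ∈ sph β (m - j), ‖g (w⁻¹ * c)‖ ^ q ≤ (lqNorm q g) ^ q := by
    rw [lqNorm_pow_eq_sum hq0 Gg (fun t ht => by simpa [hGg] using ht), ← Finset.sum_product']
    refine sum_le_sum_of_inj _ Gg _ _ (fun t _ => Real.rpow_nonneg (norm_nonneg _) q)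
      (fun x => x.1⁻¹ * x.2) ?_ ?_
    · rintro ⟨w, c⟩ ⟨hx, hφ⟩ ⟨w', c'⟩ ⟨hx', hφ'⟩ hee
      simp only [Finset.mem_product] at hx hx'
      have key : ∀ (w₀ c₀ : FreeGroup β), w₀ ∈ sph β j → c₀ ∈ sph β (m - j) →
          g (w₀⁻¹ * c₀) ≠ 0 → pref j (w₀⁻¹ * c₀) = w₀⁻¹ := by
        intro w₀ c₀ hw₀ hc₀ hne
        have hnw : FreeGroup.norm w₀⁻¹ = j := by
          rw [FreeGroup.norm_inv_eq]
          exact norm_of_mem_sph hw₀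
        have hnc : FreeGroup.norm c₀ = m - j := norm_of_mem_sph hc₀
        have hnm : FreeGroup.norm (w₀⁻¹ * c₀) =
            FreeGroup.norm w₀⁻¹ + FreeGroup.norm c₀ := by
          rw [hgm _ hne, hnw, hnc]
          omega
        exact pref_eq_of_split (toWord_mul_of_norm_add hnm) hnw
      have hgne : g (w⁻¹ * c) ≠ 0 := by
        intro hc
        rw [hc, norm_zero, Real.zero_rpow (ne_of_gt hq0)] at hφ
        exact hφ rfl
      have hgne' : g (w'⁻¹ * c') ≠ 0 := by
        intro hc
        rw [hc, norm_zero, Real.zero_rpow (ne_of_gt hq0)] at hφ'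
        exact hφ' rfl
      have hee' : w⁻¹ * c = w'⁻¹ * c' := hee
      have hww : w⁻¹ = w'⁻¹ := by
        rw [← key w c hx.1 hx.2 hgne, ← key w' c' hx'.1 hx'.2 hgne', hee']
      refine Prod.ext (inv_injective hww) ?_
      rw [hww] at hee'
      exact mul_left_cancel hee'
    · rintro ⟨w, c⟩ hx hφ
      have hgne : g (w⁻¹ * c) ≠ 0 := by
        intro hc
        rw [hc, norm_zero, Real.zero_rpow (ne_of_gt hq0)] at hφ
        exact hφ rfl
      exact ⟨by simpa [hGg] using hgne, le_refl _⟩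
  -- conclusion
  have chain : (lqNorm q (sphRestrict L (conv f g))) ^ q ≤ (lqNorm q f * lqNorm q g) ^ q := by
    rw [lhs_pow, Real.mul_rpow (lqNorm_nonneg f) (lqNorm_nonneg g)]
    refine le_trans step2 (le_trans step3 ?_)
    refine mul_le_mul step4 step5 ?_ (Real.rpow_nonneg (lqNorm_nonneg f) q)
    exact Finset.sum_nonneg fun w _ => Finset.sum_nonneg fun c _ =>
      Real.rpow_nonneg (norm_nonneg _) q
  exact le_of_rpow_le (lqNorm_nonneg _) (mul_nonneg (lqNorm_nonneg f) (lqNorm_nonneg g))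
    hq0 chain

end Piece


section Step
variable {β : Type*} [Fintype β] [DecidableEq β] {q : ℝ}

lemma lqNorm_add_le {G : Type*} (hq : 1 ≤ q) {h1 h2 : G → ℂ}
    (H1 : (Function.support h1).Finite) (H2 : (Function.support h2).Finite) :
    lqNorm q (h1 + h2) ≤ lqNorm q h1 + lqNorm q h2 := by
  classical
  have hq0 : (0 : ℝ) < q := lt_of_lt_of_le one_pos hq
  set A := H1.toFinset ∪ H2.toFinset with hA
  have m1 : ∀ s, h1 s ≠ 0 → s ∈ A := fun s hs =>
    Finset.mem_union_left _ (by simpa using hs)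
  have m2 : ∀ s, h2 s ≠ 0 → s ∈ A := fun s hs =>
    Finset.mem_union_right _ (by simpa using hs)
  have m12 : ∀ s, (h1 + h2) s ≠ 0 → s ∈ A := by
    intro s hs
    rcases eq_or_ne (h1 s) 0 with h | h
    · refine m2 s fun hc => hs ?_
      show h1 s + h2 s = 0
      rw [h, hc, add_zero]
    · exact m1 s h
  rw [lqNorm_eq_sum hq0 A m12, lqNorm_eq_sum hq0 A m1, lqNorm_eq_sum hq0 A m2]
  calc (∑ s ∈ A, ‖(h1 + h2) s‖ ^ q) ^ (1 / q)
      ≤ (∑ s ∈ A, (‖h1 s‖ + ‖h2 s‖) ^ q) ^ (1 / q) := by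
        refine Real.rpow_le_rpow (Finset.sum_nonneg fun s _ =>
          Real.rpow_nonneg (norm_nonneg _) q) (Finset.sum_le_sum fun s _ => ?_)
          (le_of_lt (one_div_pos.mpr hq0))
        exact Real.rpow_le_rpow (norm_nonneg _) (norm_add_le _ _) (le_of_lt hq0)
    _ ≤ (∑ s ∈ A, ‖h1 s‖ ^ q) ^ (1 / q) + (∑ s ∈ A, ‖h2 s‖ ^ q) ^ (1 / q) :=
        Real.Lp_add_le_of_nonneg A hq (fun s _ => norm_nonneg _) (fun s _ => norm_nonneg _)

lemma lqNorm_sum_le {G ι : Type*} (hq : 1 ≤ q) (I : Finset ι) (h : ι → G → ℂ)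
    (H : ∀ i ∈ I, (Function.support (h i)).Finite) :
    (Function.support (∑ i ∈ I, h i)).Finite ∧
      lqNorm q (∑ i ∈ I, h i) ≤ ∑ i ∈ I, lqNorm q (h i) := by
  classical
  have hq0 : (0 : ℝ) < q := lt_of_lt_of_le one_pos hq
  induction I using Finset.cons_induction with
  | empty =>
    constructor
    · simp
    · rw [Finset.sum_empty, Finset.sum_empty]
      exact le_of_eq (lqNorm_zero hq0 fun s => rfl)
  | cons a I ha ih =>
    obtain ⟨ih1, ih2⟩ := ih (fun i hi => H i (Finset.mem_cons_of_mem hi))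
    have hha : (Function.support (h a)).Finite := H a (Finset.mem_cons_self a I)
    rw [Finset.sum_cons, Finset.sum_cons]
    have hfin : (Function.support (h a + ∑ i ∈ I, h i)).Finite :=
      (hha.union ih1).subset (Function.support_add _ _)
    refine ⟨hfin, ?_⟩
    calc lqNorm q (h a + ∑ i ∈ I, h i) ≤ lqNorm q (h a) + lqNorm q (∑ i ∈ I, h i) :=
          lqNorm_add_le hq hha ih1
      _ ≤ lqNorm q (h a) + ∑ i ∈ I, lqNorm q (h i) := by linarith

lemma sphRestrict_sum {ι : Type*} (L : ℕ) (I : Finset ι) (h : ι → FreeGroup β → ℂ) :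
    sphRestrict L (∑ i ∈ I, h i) = ∑ i ∈ I, sphRestrict L (h i) := by
  funext s
  rw [Finset.sum_apply]
  unfold sphRestrict
  by_cases hc : FreeGroup.norm s = L
  · rw [if_pos hc, Finset.sum_apply]
    exact Finset.sum_congr rfl fun i _ => (if_pos hc).symm
  · rw [if_neg hc]
    symm
    exact Finset.sum_eq_zero fun i _ => if_neg hc

/-- The key step: convolving with a sphere-supported function multiplies `sNq` by
at most `(k+1)‖f‖_q`. -/
lemma sNq_conv_le (hq1 : 1 < q) (hq2 : q ≤ 2) {k : ℕ} {f g : FreeGroup β → ℂ}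
    (hf : (Function.support f).Finite) (hg : (Function.support g).Finite)
    (hfk : ∀ t, f t ≠ 0 → FreeGroup.norm t = k) :
    sNq q (conv f g) ≤ ((k : ℝ) + 1) * lqNorm q f * sNq q g := by
  classical
  have hq0 : (0 : ℝ) < q := lt_trans one_pos hq1
  set M := hg.toFinset.image FreeGroup.norm with hM
  have hMg : ∀ s, g s ≠ 0 → FreeGroup.norm s ∈ M :=
    fun s hs => Finset.mem_image_of_mem _ (by simpa using hs)
  have hg_eq : g = ∑ m ∈ M, sphRestrict m g := eq_sum_sphRestrict M hMg
  have hconv_eq : conv f g = ∑ m ∈ M, conv f (sphRestrict m g) := by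
    conv_lhs => rw [hg_eq]
    exact conv_sum f hf M _
  have hfin_m : ∀ m ∈ M, (Function.support (conv f (sphRestrict m g))).Finite :=
    fun m _ => support_conv_finite hf (support_sphRestrict_finite hg)
  have hconv_fin : (Function.support (conv f g)).Finite := support_conv_finite hf hg
  set ML := hconv_fin.toFinset.image FreeGroup.norm with hML
  have hMLs : ∀ s, conv f g s ≠ 0 → FreeGroup.norm s ∈ ML :=
    fun s hs => Finset.mem_image_of_mem _ (by simpa using hs)
  rw [sNq_eq_sum hq0 ML hMLs]
  have bound1 : ∀ L ∈ ML, lqNorm q (sphRestrict L (conv f g)) ≤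
      ∑ m ∈ M, lqNorm q (sphRestrict L (conv f (sphRestrict m g))) := by
    intro L _
    have : sphRestrict L (conv f g) = ∑ m ∈ M, sphRestrict L (conv f (sphRestrict m g)) := by
      rw [hconv_eq, sphRestrict_sum]
    rw [this]
    exact (lqNorm_sum_le (le_of_lt hq1) M _
      (fun m hm => support_sphRestrict_finite (hfin_m m hm))).2
  calc ∑ L ∈ ML, lqNorm q (sphRestrict L (conv f g))
      ≤ ∑ L ∈ ML, ∑ m ∈ M, lqNorm q (sphRestrict L (conv f (sphRestrict m g))) :=
        Finset.sum_le_sum bound1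
    _ = ∑ m ∈ M, ∑ L ∈ ML, lqNorm q (sphRestrict L (conv f (sphRestrict m g))) :=
        Finset.sum_comm
    _ ≤ ∑ m ∈ M, ((k : ℝ) + 1) * (lqNorm q f * lqNorm q (sphRestrict m g)) := by
        refine Finset.sum_le_sum fun m _ => ?_
        -- for fixed m, reindex the nonvanishing spheres by the cancellation number j
        have hgm : ∀ t, sphRestrict m g t ≠ 0 → FreeGroup.norm t = m :=
          fun t ht => (sphRestrict_ne_zero ht).2
        have hgmfin : (Function.support (sphRestrict m g)).Finite :=
          support_sphRestrict_finite hg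
        have vanish : ∀ L, lqNorm q (sphRestrict L (conv f (sphRestrict m g))) ≠ 0 →
            ∃ j, j ≤ k ∧ j ≤ m ∧ L = (k - j) + (m - j) := by
          intro L hL
          have : ∃ s, sphRestrict L (conv f (sphRestrict m g)) s ≠ 0 := by
            by_contra hc
            push_neg at hc
            exact hL (lqNorm_zero hq0 hc)
          obtain ⟨s, hs⟩ := this
          obtain ⟨h1, h2⟩ := sphRestrict_ne_zero hs
          obtain ⟨t, ht, hu⟩ := conv_ne_zero h1
          obtain ⟨p, w, qq, e1', e2', n1, n2, n3, -, -⟩ := split t (t⁻¹ * s)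
          have hts : t * (t⁻¹ * s) = s := by group
          rw [hts] at n3
          have hnt : FreeGroup.norm t = k := hfk t ht
          have hnu : FreeGroup.norm (t⁻¹ * s) = m := hgm _ hu
          exact ⟨FreeGroup.norm w, by omega, by omega, by omega⟩
        have reindex : ∑ L ∈ ML, lqNorm q (sphRestrict L (conv f (sphRestrict m g))) ≤
            ∑ j ∈ Finset.range (min k m + 1),
              lqNorm q (sphRestrict ((k - j) + (m - j)) (conv f (sphRestrict m g))) := by
          refine sum_le_sum_of_inj ML _ _ _ (fun j _ => lqNorm_nonneg _)
            (fun L => (k + m - L) / 2) ?_ ?_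
          · intro L hL L' hL'
            simp only [Set.mem_setOf_eq] at hL hL'
            obtain ⟨j, hj1, hj2, hj3⟩ := vanish L hL.2
            obtain ⟨j', hj1', hj2', hj3'⟩ := vanish L' hL'.2
            intro hee
            have hee' : (k + m - L) / 2 = (k + m - L') / 2 := hee
            omega
          · intro L _ hL
            obtain ⟨j, hj1, hj2, hj3⟩ := vanish L hL
            have hj : (k + m - L) / 2 = j := by omega
            refine ⟨?_, ?_⟩
            · show (k + m - L) / 2 ∈ Finset.range (min k m + 1)
              rw [hj]
              exact Finset.mem_range.mpr (by omega)
            · show lqNorm q (sphRestrict L (conv f (sphRestrict m g))) ≤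
                lqNorm q (sphRestrict ((k - (k + m - L) / 2) + (m - (k + m - L) / 2))
                  (conv f (sphRestrict m g)))
              have hLL : (k - (k + m - L) / 2) + (m - (k + m - L) / 2) = L := by omega
              rw [hLL]
        have each : ∀ j ∈ Finset.range (min k m + 1),
            lqNorm q (sphRestrict ((k - j) + (m - j)) (conv f (sphRestrict m g))) ≤
              lqNorm q f * lqNorm q (sphRestrict m g) := by
          intro j hj
          rw [Finset.mem_range] at hj
          exact piece hq1 hq2 (by omega) (by omega) hf hgmfin hfk hgm
        calc ∑ L ∈ ML, lqNorm q (sphRestrict L (conv f (sphRestrict m g)))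
            ≤ ∑ j ∈ Finset.range (min k m + 1),
                lqNorm q (sphRestrict ((k - j) + (m - j)) (conv f (sphRestrict m g))) := reindex
          _ ≤ ∑ _j ∈ Finset.range (min k m + 1), lqNorm q f * lqNorm q (sphRestrict m g) :=
              Finset.sum_le_sum each
          _ = ((min k m : ℝ) + 1) * (lqNorm q f * lqNorm q (sphRestrict m g)) := by
              rw [Finset.sum_const, Finset.card_range, nsmul_eq_mul]
              push_cast
              ring
          _ ≤ ((k : ℝ) + 1) * (lqNorm q f * lqNorm q (sphRestrict m g)) := by
              refine mul_le_mul_of_nonneg_right ?_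
                (mul_nonneg (lqNorm_nonneg _) (lqNorm_nonneg _))
              have : (min k m : ℝ) ≤ (k : ℝ) := by
                exact_mod_cast Nat.cast_le.mpr (min_le_left k m)
              linarith
    _ = ((k : ℝ) + 1) * lqNorm q f * sNq q g := by
        rw [sNq_eq_sum hq0 M hMg, ← Finset.mul_sum, ← Finset.mul_sum]
        ring

end Step


lemma convPow_succ {G : Type*} [Group G] (h : G → ℂ) (n : ℕ) :
    convPow h (n + 1) = conv h (convPow h n) := rfl

end HaagerupAux

/-- for `1 < q ≤ 2`, `n ≥ 1` and `supp f ⊆ W_k`, one has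
`|(f^* * f)^{(*2n)}|_q ≤ (k+1)^(4n-1) |f|_q^(4n)`. -/
theorem convPow_norm_bound (d k n : ℕ) (hd : 2 ≤ d) (hn : 1 ≤ n)
    (q : ℝ) (hq1 : 1 < q) (hq2 : q ≤ 2)
    (f : FreeGroup (Fin d) → ℂ) (hf : (Function.support f).Finite)
    (hfk : ∀ t, f t ≠ 0 → FreeGroup.norm t = k) :
    lqNorm q (convPow (conv (fstar f) f) (2 * n)) ≤
      ((k : ℝ) + 1) ^ (4 * n - 1) * (lqNorm q f) ^ (4 * n) := by
  classical
  open HaagerupAux in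
  have hq0 : (0 : ℝ) < q := lt_trans one_pos hq1
  set b := conv (fstar f) f with hb
  have hfs_fin := HaagerupAux.support_fstar_finite hf
  have hfsk : ∀ t, fstar f t ≠ 0 → FreeGroup.norm t = k := by
    intro t ht
    have h1 := hfk t⁻¹ (HaagerupAux.fstar_ne_zero_iff.mp ht)
    rwa [FreeGroup.norm_inv_eq] at h1
  have hb_fin := HaagerupAux.support_conv_finite hfs_fin hf
  set Lf := lqNorm q f with hLf
  have hLf0 : 0 ≤ Lf := HaagerupAux.lqNorm_nonneg f
  have hk0 : (0 : ℝ) ≤ (k : ℝ) + 1 := by positivity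
  have sNqf : HaagerupAux.sNq q f = Lf := HaagerupAux.sNq_single hq0 hfk
  have main : ∀ i : ℕ, (Function.support (convPow b (i + 1))).Finite ∧
      HaagerupAux.sNq q (convPow b (i + 1)) ≤
        (((k : ℝ) + 1) * Lf ^ 2) * ((((k : ℝ) + 1) ^ 2) * Lf ^ 2) ^ i := by
    intro i
    induction i with
    | zero =>
      rw [show (0 + 1 : ℕ) = 1 from rfl, HaagerupAux.conv_convPow_zero]
      refine ⟨hb_fin, ?_⟩
      rw [pow_zero, mul_one]
      calc HaagerupAux.sNq q b ≤ ((k : ℝ) + 1) * lqNorm q (fstar f) * HaagerupAux.sNq q f :=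
            HaagerupAux.sNq_conv_le hq1 hq2 hfs_fin hf hfsk
        _ = ((k : ℝ) + 1) * Lf ^ 2 := by
            rw [HaagerupAux.lqNorm_fstar, sNqf]
            ring
    | succ i ih =>
      obtain ⟨ih1, ih2⟩ := ih
      have hstep : convPow b (i + 1 + 1) = conv (fstar f) (conv f (convPow b (i + 1))) := by
        rw [convPow_succ, hb, HaagerupAux.conv_assoc hfs_fin hf]
      have hcf_fin : (Function.support (conv f (convPow b (i + 1)))).Finite :=
        HaagerupAux.support_conv_finite hf ih1
      refine ⟨?_, ?_⟩
      · rw [hstep]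
        exact HaagerupAux.support_conv_finite hfs_fin hcf_fin
      · rw [hstep]
        have hsnn : 0 ≤ HaagerupAux.sNq q (convPow b (i + 1)) := HaagerupAux.sNq_nonneg _
        calc HaagerupAux.sNq q (conv (fstar f) (conv f (convPow b (i + 1))))
            ≤ ((k : ℝ) + 1) * lqNorm q (fstar f) *
                HaagerupAux.sNq q (conv f (convPow b (i + 1))) :=
              HaagerupAux.sNq_conv_le hq1 hq2 hfs_fin hcf_fin hfsk
          _ ≤ ((k : ℝ) + 1) * lqNorm q (fstar f) *
                (((k : ℝ) + 1) * Lf * HaagerupAux.sNq q (convPow b (i + 1))) := by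
              refine mul_le_mul_of_nonneg_left
                (HaagerupAux.sNq_conv_le hq1 hq2 hf ih1 hfk) ?_
              rw [HaagerupAux.lqNorm_fstar]
              positivity
          _ = (((k : ℝ) + 1) ^ 2 * Lf ^ 2) * HaagerupAux.sNq q (convPow b (i + 1)) := by
              rw [HaagerupAux.lqNorm_fstar]
              ring
          _ ≤ (((k : ℝ) + 1) ^ 2 * Lf ^ 2) *
                ((((k : ℝ) + 1) * Lf ^ 2) * ((((k : ℝ) + 1) ^ 2) * Lf ^ 2) ^ i) := by
              refine mul_le_mul_of_nonneg_left ih2 (by positivity)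
          _ = (((k : ℝ) + 1) * Lf ^ 2) * ((((k : ℝ) + 1) ^ 2) * Lf ^ 2) ^ (i + 1) := by
              ring
  have h2n : 2 * n - 1 + 1 = 2 * n := by omega
  obtain ⟨fin2n, bound⟩ := main (2 * n - 1)
  rw [h2n] at fin2n bound
  have hlq : lqNorm q (convPow b (2 * n)) ≤ HaagerupAux.sNq q (convPow b (2 * n)) :=
    HaagerupAux.lqNorm_le_sNq (le_of_lt hq1) fin2n
  refine le_trans (le_trans hlq bound) (le_of_eq ?_)
  have e1 : 1 + 2 * (2 * n - 1) = 4 * n - 1 := by omega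
  have e2 : 2 + 2 * (2 * n - 1) = 4 * n := by omega
  rw [mul_pow, ← pow_mul, ← pow_mul]
  calc ((k : ℝ) + 1) * Lf ^ 2 * (((k : ℝ) + 1) ^ (2 * (2 * n - 1)) * Lf ^ (2 * (2 * n - 1)))
      = ((k : ℝ) + 1) ^ (1 + 2 * (2 * n - 1)) * Lf ^ (2 + 2 * (2 * n - 1)) := by
        rw [pow_add, pow_add, pow_one]
        ring
    _ = ((k : ℝ) + 1) ^ (4 * n - 1) * Lf ^ (4 * n) := by rw [e1, e2]
end

section
/- Let Γ be a countable discrete group, 2 ≤ p < ∞, and q with 1/p + 1/q = 1. Let π be a unitary representation of Γ on a Hilbert space H with a cyclic vector ξ such that the matrix coefficient s ↦ ⟨π(s)ξ, ξ⟩ lies in ℓ_p(Γ). Then for every finitely supported f : Γ → ℂ, ‖π(f)‖ ≤ liminf_{n→∞} |(f^* * f)^{(*2n)}|_q^{1/(4n)}. -/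
/-! ### Auxiliary real-sequence and operator lemmas -/

/-- A log-convex nonnegative sequence with `a 0 ≤ 1` satisfies `a 1 ^ n ≤ a n`. -/
lemma aux_seq (a : ℕ → ℝ) (h0 : a 0 ≤ 1) (hnn : ∀ n, 0 ≤ a n)
    (h01 : a 0 = 0 → a 1 = 0)
    (hconv : ∀ n, 1 ≤ n → a n ^ 2 ≤ a (n - 1) * a (n + 1)) :
    ∀ n, 1 ≤ n → a 1 ^ n ≤ a n := by
  rcases eq_or_lt_of_le (hnn 1) with h1 | h1
  · intro n hn
    rw [← h1, zero_pow (by omega)]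
    exact hnn n
  · have h0pos : 0 < a 0 := by
      rcases eq_or_lt_of_le (hnn 0) with h | h
      · exact absurd (h01 h.symm) (ne_of_gt h1)
      · exact h
    have key : ∀ n, 0 < a n ∧ a 1 * a n ≤ a (n + 1) * a 0 := by
      intro n
      induction n with
      | zero => exact ⟨h0pos, le_refl _⟩
      | succ n ih =>
        obtain ⟨hpos, hle⟩ := ih
        have hpos1 : 0 < a (n + 1) := by
          nlinarith
        refine ⟨hpos1, ?_⟩
        have hc := hconv (n + 1) (by omega)
        simp only [Nat.add_sub_cancel] at hc
        have h2 : a 1 * a (n + 1) * (a n * a (n + 1)) ≤ a (n + 1 + 1) * a 0 * (a n * a (n + 1)) := by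
          have e1 : a 1 * a (n + 1) * (a n * a (n + 1)) = (a 1 * a n) * (a (n+1) ^ 2) := by ring
          have e2 : a (n + 1 + 1) * a 0 * (a n * a (n + 1))
              = (a (n+1) * a 0) * (a n * a (n + 1 + 1)) := by ring
          rw [e1, e2]
          exact mul_le_mul hle hc (by positivity) (by positivity)
        exact le_of_mul_le_mul_right h2 (by positivity)
    have step : ∀ n, a 1 * a n ≤ a (n + 1) := by
      intro n
      calc a 1 * a n ≤ a (n + 1) * a 0 := (key n).2
        _ ≤ a (n + 1) * 1 := mul_le_mul_of_nonneg_left h0 (hnn _)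
        _ = a (n + 1) := mul_one _
    intro n hn
    induction n with
    | zero => omega
    | succ n ih =>
      rcases Nat.lt_or_ge 1 (n + 1) with h | h
      · have hn1 : 1 ≤ n := by omega
        calc a 1 ^ (n + 1) = a 1 * a 1 ^ n := by ring
          _ ≤ a 1 * a n := mul_le_mul_of_nonneg_left (ih hn1) (hnn 1)
          _ ≤ a (n + 1) := step n
      · have : n = 0 := by omega
        simp [this]

open scoped InnerProductSpace in
/-- The operator power inequality `‖T v‖ ^ (2 m) ≤ ‖⟪v, (T†T)^m v⟫‖` for `‖v‖ ≤ 1`. -/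
lemma aux_op {H : Type*} [NormedAddCommGroup H] [InnerProductSpace ℂ H] [CompleteSpace H]
    (T : H →L[ℂ] H) (v : H) (hv : ‖v‖ ≤ 1) (m : ℕ) (hm : 1 ≤ m) :
    ‖T v‖ ^ (2 * m) ≤ ‖(⟪v, ((ContinuousLinearMap.adjoint T * T) ^ m) v⟫_ℂ : ℂ)‖ := by
  set S : H →L[ℂ] H := ContinuousLinearMap.adjoint T * T with hS
  have hSA : ContinuousLinearMap.adjoint S = S := by
    rw [← ContinuousLinearMap.star_eq_adjoint, hS, star_mul]
    simp [← ContinuousLinearMap.star_eq_adjoint]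
  have hmove : ∀ x y : H, (⟪x, S y⟫_ℂ : ℂ) = ⟪S x, y⟫_ℂ := by
    intro x y
    conv_rhs => rw [← hSA]
    rw [ContinuousLinearMap.adjoint_inner_left]
  have hmove2 : ∀ x y : H, (⟪x, S y⟫_ℂ : ℂ) = ⟪T x, T y⟫_ℂ := by
    intro x y
    rw [hS]
    rw [ContinuousLinearMap.mul_apply, ContinuousLinearMap.adjoint_inner_right]
  have e1 : ∀ i j : ℕ, (⟪v, (S ^ (i + j)) v⟫_ℂ : ℂ) = ⟪(S ^ i) v, (S ^ j) v⟫_ℂ := by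
    intro i
    induction i with
    | zero => simp
    | succ i ih =>
      intro j
      have h1 : i + 1 + j = i + (j + 1) := by ring
      rw [h1, ih (j + 1)]
      have h2 : (S ^ (j + 1)) v = S ((S ^ j) v) := by
        rw [pow_succ']; rfl
      have h3 : (S ^ (i + 1)) v = S ((S ^ i) v) := by
        rw [pow_succ']; rfl
      rw [h2, h3, hmove]
  have e2 : ∀ i j : ℕ, (⟪v, (S ^ (i + j + 1)) v⟫_ℂ : ℂ) = ⟪T ((S ^ i) v), T ((S ^ j) v)⟫_ℂ := by
    intro i j
    have h1 : i + j + 1 = i + (j + 1) := by ring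
    have h2 : (S ^ (j + 1)) v = S ((S ^ j) v) := by
      rw [pow_succ']; rfl
    rw [h1, e1 i (j + 1), h2, hmove2]
  set a : ℕ → ℝ := fun m => ‖(⟪v, (S ^ m) v⟫_ℂ : ℂ)‖ with ha
  have heven : ∀ i, a (i + i) = ‖(S ^ i) v‖ ^ 2 := by
    intro i
    rw [ha]
    simp only [e1 i i, inner_self_eq_norm_sq_to_K]
    rw [norm_pow, RCLike.norm_ofReal, abs_norm]
  have hodd : ∀ i, a (i + i + 1) = ‖T ((S ^ i) v)‖ ^ 2 := by
    intro i
    rw [ha]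
    simp only [e2 i i, inner_self_eq_norm_sq_to_K]
    rw [norm_pow, RCLike.norm_ofReal, abs_norm]
  have key := aux_seq a
    (by
      have h := heven 0
      simp only [Nat.add_zero, pow_zero, ContinuousLinearMap.one_apply] at h
      rw [h]
      exact pow_le_one₀ (norm_nonneg v) hv)
    (fun n => norm_nonneg _)
    (by
      intro h00
      have h := heven 0
      simp only [Nat.add_zero, pow_zero, ContinuousLinearMap.one_apply] at h
      have : ‖v‖ ^ 2 = 0 := by rw [← h]; exact h00
      have hv0 : v = 0 := by
        rw [pow_eq_zero_iff (by norm_num)] at this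
        exact norm_eq_zero.mp this
      rw [ha]
      simp [hv0])
    (by
      intro n hn
      rcases Nat.even_or_odd n with ⟨i, hi⟩ | ⟨i, hi⟩
      · obtain ⟨k, hk⟩ : ∃ k, i = k + 1 := ⟨i - 1, by omega⟩
        have hn' : n = k + (k + 1) + 1 := by omega
        have hnm : n - 1 = k + k + 1 := by omega
        have hnp : n + 1 = (k+1) + (k+1) + 1 := by omega
        have hb : a n ≤ ‖T ((S ^ k) v)‖ * ‖T ((S ^ (k+1)) v)‖ := by
          rw [ha, hn']
          simp only [e2 k (k + 1)]
          exact norm_inner_le_norm _ _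
        rw [hnm, hnp, hodd k, hodd (k+1)]
        calc a n ^ 2 ≤ (‖T ((S ^ k) v)‖ * ‖T ((S ^ (k+1)) v)‖) ^ 2 := by
              apply pow_le_pow_left₀ (norm_nonneg _) hb
          _ = ‖T ((S ^ k) v)‖ ^ 2 * ‖T ((S ^ (k+1)) v)‖ ^ 2 := by ring
      · have hn' : n = i + (i + 1) := by omega
        have hnm : n - 1 = i + i := by omega
        have hnp : n + 1 = (i+1) + (i+1) := by omega
        have hb : a n ≤ ‖(S ^ i) v‖ * ‖(S ^ (i+1)) v‖ := by
          rw [ha, hn']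
          simp only [e1 i (i + 1)]
          exact norm_inner_le_norm _ _
        rw [hnm, hnp, heven i, heven (i+1)]
        calc a n ^ 2 ≤ (‖(S ^ i) v‖ * ‖(S ^ (i+1)) v‖) ^ 2 := by
              apply pow_le_pow_left₀ (norm_nonneg _) hb
          _ = ‖(S ^ i) v‖ ^ 2 * ‖(S ^ (i+1)) v‖ ^ 2 := by ring)
    m hm
  have ha1 : a 1 = ‖T v‖ ^ 2 := by
    have := hodd 0
    simpa using this
  calc ‖T v‖ ^ (2 * m) = (‖T v‖ ^ 2) ^ m := by rw [← pow_mul, mul_comm]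
    _ = a 1 ^ m := by rw [ha1]
    _ ≤ a m := key

/-! ### Elementary `ℓ^q ≤ ℓ^1` facts -/

lemma real_add_rpow (q : ℝ) (hq : 1 ≤ q) (a b : ℝ) (ha : 0 ≤ a) (hb : 0 ≤ b) :
    a ^ q + b ^ q ≤ (a + b) ^ q := by
  lift a to NNReal using ha
  lift b to NNReal using hb
  have := NNReal.add_rpow_le_rpow_add a b hq
  exact_mod_cast this

lemma sum_rpow_le {ι : Type*} (q : ℝ) (hq : 1 ≤ q) (w : ι → ℝ) (hw : ∀ i, 0 ≤ w i)
    (D : Finset ι) : ∑ i ∈ D, w i ^ q ≤ (∑ i ∈ D, w i) ^ q := by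
  classical
  induction D using Finset.cons_induction with
  | empty => simp [Real.zero_rpow (by linarith : q ≠ 0)]
  | cons x D' hx ih =>
    rw [Finset.sum_cons, Finset.sum_cons]
    calc w x ^ q + ∑ i ∈ D', w i ^ q ≤ w x ^ q + (∑ i ∈ D', w i) ^ q := by linarith
      _ ≤ (w x + ∑ i ∈ D', w i) ^ q :=
          real_add_rpow q hq _ _ (hw x) (Finset.sum_nonneg fun i _ => hw i)

/-! ### The `opRep` machinery -/

section Aux

open Function
open scoped Pointwise InnerProductSpace

variable {Γ : Type*} [Group Γ] {H : Type*} [NormedAddCommGroup H]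
  [InnerProductSpace ℂ H] [CompleteSpace H]

/-- The operator attached to a finitely supported function. -/
noncomputable def opRep (π : Γ →* unitary (H →L[ℂ] H)) (a : Γ → ℂ) : H →L[ℂ] H :=
  ∑ᶠ s, a s • (π s : H →L[ℂ] H)

variable (π : Γ →* unitary (H →L[ℂ] H))

lemma opRep_eq_sum' {a : Γ → ℂ} {A : Finset Γ} (hA : support a ⊆ A) :
    opRep π a = ∑ s ∈ A, a s • (π s : H →L[ℂ] H) := by
  apply finsum_eq_finset_sum_of_support_subset
  intro s hs
  have : a s ≠ 0 := by
    intro h0; simp [h0] at hs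
  exact hA this

lemma conv_eq_sum {a : Γ → ℂ} (b : Γ → ℂ) {A : Finset Γ} (hA : support a ⊆ A) (s : Γ) :
    conv a b s = ∑ t ∈ A, a t * b (t⁻¹ * s) := by
  apply tsum_eq_sum
  intro t ht
  have : a t = 0 := by
    by_contra h0; exact ht (hA h0)
  simp [this]

lemma conv_support_subset {a b : Γ → ℂ} {A B : Finset Γ} (hA : support a ⊆ A)
    (hB : support b ⊆ B) : support (conv a b) ⊆ (A : Set Γ) * (B : Set Γ) := by
  intro s hs
  rw [mem_support, conv_eq_sum b hA s] at hs
  obtain ⟨t, htA, hne⟩ := Finset.exists_ne_zero_of_sum_ne_zero hs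
  have hb : b (t⁻¹ * s) ≠ 0 := fun h0 => hne (by simp [h0])
  exact ⟨t, htA, t⁻¹ * s, hB hb, by group⟩

lemma opRep_conv {a b : Γ → ℂ} {A B C : Finset Γ} (hA : support a ⊆ A)
    (hB : support b ⊆ B) (hC : support (conv a b) ⊆ C) (hABC : (A : Set Γ) * B ⊆ C) :
    opRep π (conv a b) = opRep π a * opRep π b := by
  rw [opRep_eq_sum' π hA, opRep_eq_sum' π hB, opRep_eq_sum' π hC, Finset.sum_mul_sum]
  have : ∀ s ∈ C, (conv a b s) • (π s : H →L[ℂ] H)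
      = ∑ t ∈ A, (a t * b (t⁻¹ * s)) • (π s : H →L[ℂ] H) := by
    intro s _
    rw [conv_eq_sum b hA s, Finset.sum_smul]
  rw [Finset.sum_congr rfl this, Finset.sum_comm]
  refine Finset.sum_congr rfl (fun t htA => ?_)
  classical
  have himg : B.image (fun u => t * u) ⊆ C := by
    intro s hsim
    rw [Finset.mem_image] at hsim
    obtain ⟨u, huB, rfl⟩ := hsim
    exact hABC ⟨t, htA, u, huB, rfl⟩
  rw [← Finset.sum_subset himg (by
    intro s hsC hsnot
    have hb : b (t⁻¹ * s) = 0 := by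
      by_contra h0
      exact hsnot (Finset.mem_image.mpr ⟨t⁻¹ * s, hB h0, by group⟩)
    simp [hb])]
  rw [Finset.sum_image (by intro x _ y _ h; exact mul_left_cancel h)]
  refine Finset.sum_congr rfl (fun u huB => ?_)
  have : (π (t * u) : H →L[ℂ] H) = (π t : H →L[ℂ] H) * (π u : H →L[ℂ] H) := by
    rw [map_mul]; rfl
  rw [inv_mul_cancel_left, this, smul_mul_smul_comm]

lemma star_pi (s : Γ) : star (π s : H →L[ℂ] H)
    = ((π s⁻¹ : unitary (H →L[ℂ] H)) : H →L[ℂ] H) := by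
  rw [map_inv, ← Unitary.star_eq_inv, ← Unitary.coe_star]

lemma fstar_support [DecidableEq Γ] {a : Γ → ℂ} {A : Finset Γ} (hA : support a ⊆ A) :
    support (fstar a) ⊆ A.image (fun t => t⁻¹) := by
  intro s hs
  have : a s⁻¹ ≠ 0 := by
    intro h0; apply hs; simp [fstar, h0]
  exact Finset.mem_image.mpr ⟨s⁻¹, hA this, inv_inv s⟩

lemma opRep_fstar [DecidableEq Γ] {a : Γ → ℂ} {A : Finset Γ} (hA : support a ⊆ A) :
    opRep π (fstar a) = star (opRep π a) := by
  rw [opRep_eq_sum' π hA, opRep_eq_sum' π (fstar_support hA)]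
  rw [star_sum]
  rw [Finset.sum_image (by intro x _ y _ h; exact inv_injective h)]
  refine Finset.sum_congr rfl (fun t htA => ?_)
  rw [star_smul, star_pi]
  simp [fstar]

lemma opRep_delta {d : Γ → ℂ} (h1 : d 1 = 1) (h0 : ∀ s : Γ, s ≠ 1 → d s = 0) :
    opRep π d = 1 := by
  classical
  have hsupp : support d ⊆ ({1} : Finset Γ) := by
    intro s hs
    simp only [Finset.coe_singleton, Set.mem_singleton_iff]
    by_contra h
    exact hs (h0 s h)
  rw [opRep_eq_sum' π hsupp, Finset.sum_singleton, h1, one_smul, map_one]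
  exact OneMemClass.coe_one _

lemma opRep_inner (a : Γ → ℂ) {A : Finset Γ} (hA : support a ⊆ A) (v w : H) :
    ⟪v, opRep π a w⟫_ℂ = ∑ s ∈ A, a s * ⟪v, (π s : H →L[ℂ] H) w⟫_ℂ := by
  rw [opRep_eq_sum' π hA]
  rw [ContinuousLinearMap.sum_apply]
  rw [inner_sum]
  refine Finset.sum_congr rfl (fun s _ => ?_)
  rw [ContinuousLinearMap.smul_apply, inner_smul_right]

lemma opRep_add {a b : Γ → ℂ} (ha : (support a).Finite) (hb : (support b).Finite) :
    opRep π (a + b) = opRep π a + opRep π b := by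
  classical
  have hU : support (a + b) ⊆ ((ha.toFinset ∪ hb.toFinset : Finset Γ) : Set Γ) := by
    intro s hs
    by_contra hc
    simp only [Finset.coe_union, Set.mem_union, Set.Finite.coe_toFinset, mem_support] at hc
    push_neg at hc
    exact hs (by simp [Pi.add_apply, hc.1, hc.2])
  have hU1 : support a ⊆ ((ha.toFinset ∪ hb.toFinset : Finset Γ) : Set Γ) := by
    intro s hs; simp only [Finset.coe_union, Set.mem_union, Set.Finite.coe_toFinset]
    exact Or.inl hs
  have hU2 : support b ⊆ ((ha.toFinset ∪ hb.toFinset : Finset Γ) : Set Γ) := by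
    intro s hs; simp only [Finset.coe_union, Set.mem_union, Set.Finite.coe_toFinset]
    exact Or.inr hs
  rw [opRep_eq_sum' π hU, opRep_eq_sum' π hU1, opRep_eq_sum' π hU2, ← Finset.sum_add_distrib]
  refine Finset.sum_congr rfl (fun s _ => ?_)
  simp [add_smul]

lemma opRep_smul (c : ℂ) (a : Γ → ℂ) (ha : (support a).Finite) :
    opRep π (c • a) = c • opRep π a := by
  classical
  have h1 : support (c • a) ⊆ ha.toFinset := by
    intro s hs
    have : a s ≠ 0 := by
      intro h0; apply hs; simp [h0]
    simpa using ha.mem_toFinset.mpr this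
  rw [opRep_eq_sum' π h1, opRep_eq_sum' π (A := ha.toFinset) (by simp), Finset.smul_sum]
  refine Finset.sum_congr rfl (fun s _ => ?_)
  simp [smul_smul]

lemma pi_mul_apply (s t : Γ) (y : H) :
    (π s : H →L[ℂ] H) ((π t : H →L[ℂ] H) y) = (π (s * t) : H →L[ℂ] H) y := by
  rw [map_mul]
  rfl

lemma pi_inner (u : Γ) (x y : H) :
    ⟪(π u : H →L[ℂ] H) x, (π u : H →L[ℂ] H) y⟫_ℂ = ⟪x, y⟫_ℂ := by
  rw [← ContinuousLinearMap.adjoint_inner_right ((π u : H →L[ℂ] H)) x ((π u : H →L[ℂ] H) y)]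
  rw [← ContinuousLinearMap.star_eq_adjoint, star_pi, pi_mul_apply, inv_mul_cancel]
  have h1 : (π (1:Γ) : H →L[ℂ] H) = 1 := by rw [map_one]; exact OneMemClass.coe_one _
  rw [h1, ContinuousLinearMap.one_apply]

lemma coef_expand {g : Γ → ℂ} {G : Finset Γ} (hG : support g ⊆ G) (ξ : H) (s : Γ) :
    (⟪opRep π g ξ, (π s : H →L[ℂ] H) (opRep π g ξ)⟫_ℂ : ℂ)
      = ∑ x ∈ G ×ˢ G, ((starRingEnd ℂ) (g x.1) * g x.2)
          * (⟪ξ, (π (x.1⁻¹ * s * x.2) : H →L[ℂ] H) ξ⟫_ℂ : ℂ) := by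
  have hv : opRep π g ξ = ∑ t ∈ G, g t • ((π t : H →L[ℂ] H) ξ) := by
    rw [opRep_eq_sum' π hG, ContinuousLinearMap.sum_apply]
    exact Finset.sum_congr rfl fun t _ => rfl
  rw [Finset.sum_product, hv, sum_inner]
  refine Finset.sum_congr rfl (fun u huG => ?_)
  rw [inner_smul_left, map_sum, inner_sum, Finset.mul_sum]
  refine Finset.sum_congr rfl (fun t htG => ?_)
  rw [map_smul, inner_smul_right]
  have h1 : (π s : H →L[ℂ] H) ((π t : H →L[ℂ] H) ξ) = (π (s * t) : H →L[ℂ] H) ξ :=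
    pi_mul_apply π s t ξ
  rw [h1]
  have h2 : (π (s * t) : H →L[ℂ] H) ξ = (π u : H →L[ℂ] H) ((π (u⁻¹ * s * t) : H →L[ℂ] H) ξ) := by
    rw [pi_mul_apply]
    congr 1
    group
  rw [h2, pi_inner]
  ring

lemma coef_memlp (ξ : H) (pr : ℝ) (hp : 1 ≤ pr)
    (hcoef : Summable fun s : Γ => ‖(⟪ξ, (π s : H →L[ℂ] H) ξ⟫_ℂ : ℂ)‖ ^ pr)
    {g : Γ → ℂ} (hg : (support g).Finite) :
    Summable fun s : Γ =>
      ‖(⟪opRep π g ξ, (π s : H →L[ℂ] H) (opRep π g ξ)⟫_ℂ : ℂ)‖ ^ pr := by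
  classical
  set φ : Γ → ℂ := fun s => ⟪ξ, (π s : H →L[ℂ] H) ξ⟫_ℂ with hφ
  set P : ENNReal := ENNReal.ofReal pr with hP
  have hPr : P.toReal = pr := ENNReal.toReal_ofReal (le_trans zero_le_one hp)
  have hPpos : 0 < P.toReal := by rw [hPr]; linarith
  have htrans : ∀ u t : Γ, Memℓp (fun s => φ (u⁻¹ * s * t)) P := by
    intro u t
    apply memℓp_gen
    rw [hPr]
    set e : Γ ≃ Γ := (Equiv.mulRight t).trans (Equiv.mulLeft u⁻¹) with he
    have : (fun s => ‖φ (u⁻¹ * s * t)‖ ^ pr) = (fun x => ‖φ x‖ ^ pr) ∘ e := by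
      funext s
      simp [he, Equiv.mulRight, Equiv.mulLeft, mul_assoc]
    rw [this]
    exact (Equiv.summable_iff e).mpr hcoef
  have hc : Memℓp (fun s =>
      (⟪opRep π g ξ, (π s : H →L[ℂ] H) (opRep π g ξ)⟫_ℂ : ℂ)) P := by
    have : (fun s => (⟪opRep π g ξ, (π s : H →L[ℂ] H) (opRep π g ξ)⟫_ℂ : ℂ))
        = fun s => ∑ x ∈ hg.toFinset ×ˢ hg.toFinset,
            ((starRingEnd ℂ) (g x.1) * g x.2) * φ (x.1⁻¹ * s * x.2) := by
      funext s
      exact coef_expand π (by simp) ξ s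
    rw [this]
    apply Memℓp.finset_sum
    intro x _
    exact Memℓp.const_mul (htrans x.1 x.2) _
  have := hc.summable hPpos
  rwa [hPr] at this

lemma conv_l1 {a b : Γ → ℂ} {A B : Finset Γ} (hA : support a ⊆ A) (hB : support b ⊆ B)
    (hD : Finset Γ) :
    ∑ s ∈ hD, ‖conv a b s‖ ≤ (∑ t ∈ A, ‖a t‖) * (∑ u ∈ B, ‖b u‖) := by
  classical
  calc ∑ s ∈ hD, ‖conv a b s‖
      ≤ ∑ s ∈ hD, ∑ t ∈ A, ‖a t‖ * ‖b (t⁻¹ * s)‖ := by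
        apply Finset.sum_le_sum
        intro s _
        rw [conv_eq_sum b hA s]
        refine le_trans (norm_sum_le _ _) ?_
        apply Finset.sum_le_sum
        intro t _
        rw [norm_mul]
    _ = ∑ t ∈ A, ‖a t‖ * ∑ s ∈ hD, ‖b (t⁻¹ * s)‖ := by
        rw [Finset.sum_comm]
        exact Finset.sum_congr rfl fun t _ => (Finset.mul_sum _ _ _).symm
    _ ≤ ∑ t ∈ A, ‖a t‖ * ∑ u ∈ B, ‖b u‖ := by
        apply Finset.sum_le_sum
        intro t _
        apply mul_le_mul_of_nonneg_left _ (norm_nonneg _)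
        have himg : ∑ s ∈ hD, ‖b (t⁻¹ * s)‖ = ∑ u ∈ hD.image (fun s => t⁻¹ * s), ‖b u‖ := by
          rw [Finset.sum_image (by intro x _ y _ h; exact mul_left_cancel h)]
        rw [himg]
        have hsub : ∑ u ∈ hD.image (fun s => t⁻¹ * s), ‖b u‖
            = ∑ u ∈ hD.image (fun s => t⁻¹ * s) ∩ B, ‖b u‖ := by
          refine (Finset.sum_subset Finset.inter_subset_left ?_).symm
          intro u hu hunot
          have : u ∉ B := fun hB' => hunot (Finset.mem_inter.mpr ⟨hu, hB'⟩)
          have hb0 : b u = 0 := by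
            by_contra h0
            exact this (hB h0)
          simp [hb0]
        rw [hsub]
        exact Finset.sum_le_sum_of_subset_of_nonneg Finset.inter_subset_right
          (fun u _ _ => norm_nonneg _)
    _ = (∑ t ∈ A, ‖a t‖) * (∑ u ∈ B, ‖b u‖) := by rw [Finset.sum_mul]

theorem norm_pi_le_liminf_aux (Γ : Type*) [Group Γ] [Countable Γ]
    (H : Type*) [NormedAddCommGroup H] [InnerProductSpace ℂ H] [CompleteSpace H]
    (π : Γ →* unitary (H →L[ℂ] H)) (ξ : H)
    (hcyc : Dense (Submodule.span ℂ (Set.range fun s => (π s : H →L[ℂ] H) ξ) : Set H))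
    (p q : ℝ) (hp1 : 2 ≤ p) (hpq : 1 / p + 1 / q = 1)
    (hcoef : Summable fun s : Γ => ‖(⟪ξ, (π s : H →L[ℂ] H) ξ⟫_ℂ : ℂ)‖ ^ p)
    (f : Γ → ℂ) (hf : (Function.support f).Finite) :
    ‖∑ᶠ s : Γ, f s • (π s : H →L[ℂ] H)‖ ≤
      Filter.atTop.liminf (fun n : ℕ =>
        (lqNorm q (convPow (conv (fstar f) f) (2 * n))) ^ (1 / (4 * (n : ℝ)))) := by
  classical
  have hFf : Function.support f ⊆ hf.toFinset := by simp
  set F : Finset Γ := hf.toFinset with hFdef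
  set T : H →L[ℂ] H := opRep π f with hT
  set h : Γ → ℂ := conv (fstar f) f with hhdef
  have hfstar : Function.support (fstar f) ⊆ (F.image fun t => t⁻¹) := fstar_support hFf
  have hprodfin : ((((F.image fun t => t⁻¹) : Finset Γ) : Set Γ) * (F : Set Γ)).Finite :=
    Set.Finite.mul ((F.image fun t => t⁻¹).finite_toSet) F.finite_toSet
  set Fh : Finset Γ := hprodfin.toFinset with hFhdef
  have hhF : Function.support h ⊆ (Fh : Set Γ) := by
    rw [hFhdef, Set.Finite.coe_toFinset]
    exact conv_support_subset hfstar hFf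
  set S : H →L[ℂ] H := ContinuousLinearMap.adjoint T * T with hS
  set M : ℝ := max 1 (∑ s ∈ Fh, ‖h s‖) with hM
  have hM1 : 1 ≤ M := le_max_left _ _
  have hM0 : 0 ≤ M := by linarith
  have hMl1 : ∑ s ∈ Fh, ‖h s‖ ≤ M := le_max_right _ _
  have hSh : opRep π h = S := by
    rw [hhdef, opRep_conv π hfstar hFf (by rw [← hhdef]; exact hhF)
      (fun x hx => Finset.mem_coe.mpr (hprodfin.mem_toFinset.mpr hx)),
      opRep_fstar π hFf, hS, hT, ContinuousLinearMap.star_eq_adjoint]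
  -- support finsets, operator identity, and ℓ¹ bounds for convolution powers
  have hP : ∀ m : ℕ, ∃ D : Finset Γ, (Function.support (convPow h m) ⊆ (D : Set Γ))
      ∧ (opRep π (convPow h m) = S ^ m)
      ∧ ∀ D' : Finset Γ, ∑ s ∈ D', ‖convPow h m s‖ ≤ M ^ m := by
    intro m
    induction m with
    | zero =>
      refine ⟨{1}, ?_, ?_, ?_⟩
      · intro s hs
        simp only [Function.mem_support, convPow] at hs
        simp only [Finset.coe_singleton, Set.mem_singleton_iff]
        by_contra hc
        simp [hc] at hs
      · rw [pow_zero]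
        apply opRep_delta
        · simp [convPow]
        · intro s hs
          simp [convPow, hs]
      · intro D'
        have : ∀ s ∈ D', ‖convPow h 0 s‖ = if s = 1 then (1:ℝ) else 0 := by
          intro s _
          simp only [convPow]
          split_ifs <;> simp
        rw [Finset.sum_congr rfl this, pow_zero, Finset.sum_ite_eq' D' 1 (fun _ => (1:ℝ))]
        split_ifs <;> norm_num
    | succ m ih =>
      obtain ⟨D, hsup, hop, hl1⟩ := ih
      have hCfin : (((Fh : Finset Γ) : Set Γ) * (D : Set Γ)).Finite :=
        Set.Finite.mul Fh.finite_toSet D.finite_toSet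
      have hKsucc : convPow h (m + 1) = conv h (convPow h m) := rfl
      refine ⟨hCfin.toFinset, ?_, ?_, ?_⟩
      · rw [hKsucc]
        intro x hx
        exact Finset.mem_coe.mpr (hCfin.mem_toFinset.mpr (conv_support_subset hhF hsup hx))
      · rw [hKsucc, opRep_conv π hhF hsup
          (fun x hx => Finset.mem_coe.mpr (hCfin.mem_toFinset.mpr (conv_support_subset hhF hsup hx)))
          (fun x hx => Finset.mem_coe.mpr (hCfin.mem_toFinset.mpr hx)), hSh, hop, pow_succ']
      · intro D'
        rw [hKsucc]
        calc ∑ s ∈ D', ‖conv h (convPow h m) s‖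
            ≤ (∑ t ∈ Fh, ‖h t‖) * (∑ u ∈ D, ‖convPow h m u‖) := conv_l1 hhF hsup D'
          _ ≤ M * M ^ m := by
              apply mul_le_mul hMl1 (hl1 D) (Finset.sum_nonneg fun u _ => norm_nonneg _) hM0
          _ = M ^ (m + 1) := by ring
  choose D hDsup hDop hDl1 using hP
  -- conjugate exponent facts
  have hpq' : Real.HolderConjugate p q := Real.holderConjugate_iff.mpr ⟨by linarith, by rw [← one_div, ← one_div]; exact hpq⟩
  have hq1 : 1 < q := hpq'.symm.lt
  have hq0 : (0:ℝ) < q := by linarith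
  have hqne : q ≠ 0 := ne_of_gt hq0
  -- the sequence u
  set u : ℕ → ℝ := fun n =>
    (lqNorm q (convPow h (2 * n))) ^ (1 / (4 * (n : ℝ))) with hu
  have hlq_eq : ∀ m : ℕ, lqNorm q (convPow h m)
      = (∑ s ∈ D m, ‖convPow h m s‖ ^ q) ^ (1/q) := by
    intro m
    rw [lqNorm]
    congr 1
    apply tsum_eq_sum
    intro s hs
    have h0 : convPow h m s = 0 := by
      by_contra hc
      exact hs (Finset.mem_coe.mp (hDsup m hc))
    rw [h0, norm_zero, Real.zero_rpow hqne]
  have hlq_nonneg : ∀ m : ℕ, 0 ≤ lqNorm q (convPow h m) := by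
    intro m
    rw [hlq_eq m]
    apply Real.rpow_nonneg
    exact Finset.sum_nonneg fun s _ => Real.rpow_nonneg (norm_nonneg _) q
  have hlq_le : ∀ m : ℕ, lqNorm q (convPow h m) ≤ M ^ m := by
    intro m
    rw [hlq_eq m]
    have h1 : ∑ s ∈ D m, ‖convPow h m s‖ ^ q ≤ (∑ s ∈ D m, ‖convPow h m s‖) ^ q :=
      sum_rpow_le q (le_of_lt hq1) _ (fun s => norm_nonneg _) _
    calc (∑ s ∈ D m, ‖convPow h m s‖ ^ q) ^ (1/q)
        ≤ ((∑ s ∈ D m, ‖convPow h m s‖) ^ q) ^ (1/q) := by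
          apply Real.rpow_le_rpow (Finset.sum_nonneg fun s _ => Real.rpow_nonneg (norm_nonneg _) q)
            h1 (by positivity)
      _ = ∑ s ∈ D m, ‖convPow h m s‖ := by
          rw [← Real.rpow_mul (Finset.sum_nonneg fun s _ => norm_nonneg _), mul_one_div,
            div_self hqne, Real.rpow_one]
      _ ≤ M ^ m := hDl1 m (D m)
  -- basic properties of the sequence u
  have hu0 : ∀ n, 0 ≤ u n := fun n => Real.rpow_nonneg (hlq_nonneg _) _
  have huM : ∀ n : ℕ, 1 ≤ n → u n ≤ M := by
    intro n hn
    have hn0 : (0:ℝ) < (n:ℝ) := by exact_mod_cast hn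
    have h1 : lqNorm q (convPow h (2*n)) ≤ M ^ (2*n) := hlq_le (2*n)
    have h2 : u n ≤ (M ^ (2*n)) ^ (1 / (4 * (n:ℝ))) :=
      Real.rpow_le_rpow (hlq_nonneg _) h1 (by positivity)
    refine le_trans h2 ?_
    rw [← Real.rpow_natCast M (2*n), ← Real.rpow_mul hM0]
    have he : ((2*n : ℕ) : ℝ) * (1 / (4 * (n:ℝ))) = 1/2 := by
      push_cast
      field_simp
      ring
    rw [he]
    calc M ^ (1/2 : ℝ) ≤ M ^ (1:ℝ) := Real.rpow_le_rpow_of_exponent_le hM1 (by norm_num)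
      _ = M := Real.rpow_one M
  have hcob : Filter.IsCoboundedUnder (· ≥ ·) Filter.atTop u :=
    Filter.isCoboundedUnder_ge_of_eventually_le Filter.atTop
      (Filter.eventually_atTop.mpr ⟨1, huM⟩)
  set L : ℝ := Filter.atTop.liminf u with hL
  have hL0 : 0 ≤ L :=
    Filter.le_liminf_of_le hcob (Filter.Eventually.of_forall hu0)
  -- the key estimate for vectors in the orbit span
  have key : ∀ g : Γ → ℂ, (support g).Finite → ‖opRep π g ξ‖ ≤ 1 →
      ‖T (opRep π g ξ)‖ ≤ L := by
    intro g hg hgle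
    set v : H := opRep π g ξ with hv
    set c : Γ → ℂ := fun s => ⟪v, (π s : H →L[ℂ] H) v⟫_ℂ with hc
    have hcsum : Summable fun s => ‖c s‖ ^ p := coef_memlp π ξ p (by linarith) hcoef hg
    have htsum0 : (0:ℝ) ≤ ∑' s : Γ, ‖c s‖ ^ p :=
      tsum_nonneg (fun s => Real.rpow_nonneg (norm_nonneg _) p)
    set C' : ℝ := (∑' s : Γ, ‖c s‖ ^ p) ^ (1/p) + 1 with hC'
    have hCq0 : (0:ℝ) ≤ (∑' s : Γ, ‖c s‖ ^ p) ^ (1/p) := Real.rpow_nonneg htsum0 _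
    have hC'1 : 1 ≤ C' := by rw [hC']; linarith
    have hC'pos : (0:ℝ) < C' := by linarith
    have hstep : ∀ n : ℕ, 1 ≤ n → ‖T v‖ ≤ C' ^ (1/(4*(n:ℝ))) * u n := by
      intro n hn
      have hn0 : (0:ℝ) < (n:ℝ) := by exact_mod_cast hn
      have hm : 1 ≤ 2 * n := by omega
      have h1 : ‖T v‖ ^ (2 * (2*n)) ≤ ‖(⟪v, (S ^ (2*n)) v⟫_ℂ : ℂ)‖ :=
        aux_op T v hgle (2*n) hm
      have h2 : (⟪v, (S ^ (2*n)) v⟫_ℂ : ℂ) = ∑ s ∈ D (2*n), convPow h (2*n) s * c s := by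
        rw [← hDop (2*n), opRep_inner π _ (hDsup (2*n)) v v]
      have h3 : ‖∑ s ∈ D (2*n), convPow h (2*n) s * c s‖
          ≤ ∑ s ∈ D (2*n), ‖c s‖ * ‖convPow h (2*n) s‖ := by
        refine le_trans (norm_sum_le _ _) ?_
        apply Finset.sum_le_sum
        intro s _
        rw [norm_mul, mul_comm]
      have h4 : ∑ s ∈ D (2*n), ‖c s‖ * ‖convPow h (2*n) s‖
          ≤ (∑ s ∈ D (2*n), ‖c s‖ ^ p) ^ (1/p)
            * (∑ s ∈ D (2*n), ‖convPow h (2*n) s‖ ^ q) ^ (1/q) :=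
        Real.inner_le_Lp_mul_Lq_of_nonneg (f := fun s => ‖c s‖)
          (g := fun s => ‖convPow h (2*n) s‖) (s := D (2*n)) hpq'
          (fun s _ => norm_nonneg _) (fun s _ => norm_nonneg _)
      have h5 : (∑ s ∈ D (2*n), ‖c s‖ ^ p) ^ (1/p) ≤ C' := by
        have hle : ∑ s ∈ D (2*n), ‖c s‖ ^ p ≤ ∑' s : Γ, ‖c s‖ ^ p :=
          Summable.sum_le_tsum _ (fun s _ => Real.rpow_nonneg (norm_nonneg _) p) hcsum
        have := Real.rpow_le_rpow (Finset.sum_nonneg fun s _ =>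
          Real.rpow_nonneg (norm_nonneg _) p) hle (by positivity : (0:ℝ) ≤ 1/p)
        rw [hC']
        linarith
      have h6 : (∑ s ∈ D (2*n), ‖convPow h (2*n) s‖ ^ q) ^ (1/q)
          = lqNorm q (convPow h (2*n)) := (hlq_eq (2*n)).symm
      have h7 : ‖T v‖ ^ (4*n) ≤ C' * lqNorm q (convPow h (2*n)) := by
        have he : 2 * (2*n) = 4*n := by ring
        rw [← he]
        calc ‖T v‖ ^ (2 * (2*n)) ≤ ‖(⟪v, (S ^ (2*n)) v⟫_ℂ : ℂ)‖ := h1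
          _ = ‖∑ s ∈ D (2*n), convPow h (2*n) s * c s‖ := by rw [h2]
          _ ≤ ∑ s ∈ D (2*n), ‖c s‖ * ‖convPow h (2*n) s‖ := h3
          _ ≤ (∑ s ∈ D (2*n), ‖c s‖ ^ p) ^ (1/p)
              * (∑ s ∈ D (2*n), ‖convPow h (2*n) s‖ ^ q) ^ (1/q) := h4
          _ ≤ C' * lqNorm q (convPow h (2*n)) := by
              rw [h6]
              exact mul_le_mul_of_nonneg_right h5 (hlq_nonneg _)
      have hx0 : (0:ℝ) ≤ ‖T v‖ := norm_nonneg _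
      have hrw : ‖T v‖ = ((‖T v‖ ^ (4*n) : ℝ)) ^ (1/(4*(n:ℝ))) := by
        rw [← Real.rpow_natCast (‖T v‖) (4*n), ← Real.rpow_mul hx0]
        have : ((4*n : ℕ) : ℝ) * (1/(4*(n:ℝ))) = 1 := by
          push_cast
          field_simp
        rw [this, Real.rpow_one]
      calc ‖T v‖ = ((‖T v‖ ^ (4*n) : ℝ)) ^ (1/(4*(n:ℝ))) := hrw
        _ ≤ (C' * lqNorm q (convPow h (2*n))) ^ (1/(4*(n:ℝ))) :=
            Real.rpow_le_rpow (by positivity) h7 (by positivity)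
        _ = C' ^ (1/(4*(n:ℝ))) * u n := by
            rw [Real.mul_rpow (le_of_lt hC'pos) (hlq_nonneg _)]
    -- pass to the liminf
    by_contra hcon
    push_neg at hcon
    set r : ℝ := (L + ‖T v‖)/2 with hr
    have hrL : L < r := by rw [hr]; linarith
    have hrv : r < ‖T v‖ := by rw [hr]; linarith
    have htend1 : Filter.Tendsto (fun n : ℕ => 1/(4*(n:ℝ))) Filter.atTop (nhds 0) := by
      have h2 : (fun n : ℕ => 1/(4*(n:ℝ))) = fun n : ℕ => (1/4 : ℝ) * (1/(n:ℝ)) := by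
        funext n; ring
      rw [h2]
      have := tendsto_one_div_atTop_nhds_zero_nat (𝕜 := ℝ)
      simpa using this.const_mul (1/4 : ℝ)
    have htend2 : Filter.Tendsto (fun n : ℕ => C' ^ (1/(4*(n:ℝ)))) Filter.atTop (nhds 1) := by
      have h4 : (fun n : ℕ => C' ^ (1/(4*(n:ℝ))))
          = fun n : ℕ => Real.exp (Real.log C' * (1/(4*(n:ℝ)))) := by
        funext n
        rw [Real.rpow_def_of_pos hC'pos]
      rw [h4]
      have h5 : Filter.Tendsto (fun n : ℕ => Real.log C' * (1/(4*(n:ℝ)))) Filter.atTop (nhds 0) := by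
        simpa using htend1.const_mul (Real.log C')
      have h6 := (Real.continuous_exp.tendsto (0:ℝ)).comp h5
      rw [Real.exp_zero] at h6
      exact h6
    have htend : Filter.Tendsto (fun n : ℕ => C' ^ (1/(4*(n:ℝ))) * r) Filter.atTop (nhds r) := by
      simpa using htend2.mul_const r
    have hev : ∀ᶠ n : ℕ in Filter.atTop, C' ^ (1/(4*(n:ℝ))) * r < ‖T v‖ :=
      htend.eventually_lt_const hrv
    have hev2 : ∀ᶠ n : ℕ in Filter.atTop, r ≤ u n := by
      filter_upwards [hev, Filter.eventually_ge_atTop 1] with n h1 h2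
      have h3 := hstep n h2
      have hCe : (0:ℝ) < C' ^ (1/(4*(n:ℝ))) := Real.rpow_pos_of_pos hC'pos _
      have h8 : C' ^ (1/(4*(n:ℝ))) * r < C' ^ (1/(4*(n:ℝ))) * u n := lt_of_lt_of_le h1 h3
      exact le_of_lt (lt_of_mul_lt_mul_left h8 (le_of_lt hCe))
    have : r ≤ L := Filter.le_liminf_of_le hcob hev2
    linarith
  -- every element of the span comes from a finitely supported function
  have hrepr : ∀ v, v ∈ Submodule.span ℂ (Set.range fun s => (π s : H →L[ℂ] H) ξ) →
      ∃ g : Γ → ℂ, (support g).Finite ∧ v = opRep π g ξ := by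
    intro v hvmem
    induction hvmem using Submodule.span_induction with
    | mem x hx =>
      obtain ⟨s, rfl⟩ := hx
      refine ⟨fun t => if t = s then 1 else 0, ?_, ?_⟩
      · apply Set.Finite.subset (Set.finite_singleton s)
        intro t ht
        simp only [Set.mem_singleton_iff]
        by_contra hcon
        exact ht (by simp [hcon])
      · rw [opRep_eq_sum' π (A := {s}) (by
          intro t ht
          simp only [Finset.coe_singleton, Set.mem_singleton_iff]
          by_contra hcon
          exact ht (by simp [hcon]))]
        simp
    | zero =>
      refine ⟨0, by simp, ?_⟩
      rw [opRep_eq_sum' π (A := (∅ : Finset Γ)) (by simp)]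
      simp
    | add x y hx hy ihx ihy =>
      obtain ⟨g1, hg1, rfl⟩ := ihx
      obtain ⟨g2, hg2, rfl⟩ := ihy
      refine ⟨g1 + g2, Set.Finite.subset (hg1.union hg2) (support_add _ _), ?_⟩
      rw [opRep_add π hg1 hg2]
      simp
    | smul a x hx ihx =>
      obtain ⟨g1, hg1, rfl⟩ := ihx
      refine ⟨a • g1, Set.Finite.subset hg1 ?_, ?_⟩
      · intro t ht
        by_contra hcon
        simp only [mem_support] at ht
        exact ht (by simp [Function.notMem_support.mp hcon])
      · rw [opRep_smul π a g1 hg1]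
        simp
  -- the bound on the dense span
  have hbound : ∀ v ∈ (Submodule.span ℂ (Set.range fun s => (π s : H →L[ℂ] H) ξ) : Set H),
      ‖T v‖ ≤ L * ‖v‖ := by
    intro v hvmem
    obtain ⟨g, hgfin, rfl⟩ := hrepr v hvmem
    rcases eq_or_ne (opRep π g ξ) 0 with h0 | h0
    · rw [h0]
      simp
    · set w : H := opRep π g ξ with hw
      have hw0 : 0 < ‖w‖ := norm_pos_iff.mpr h0
      set g' : Γ → ℂ := ((‖w‖⁻¹ : ℝ) : ℂ) • g with hg'def
      have hg' : (support g').Finite := by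
        apply Set.Finite.subset hgfin
        intro t ht
        by_contra hcon
        simp only [mem_support] at ht
        exact ht (by simp [hg'def, Function.notMem_support.mp hcon])
      have hw' : opRep π g' ξ = ((‖w‖⁻¹ : ℝ) : ℂ) • w := by
        rw [hg'def, opRep_smul π _ g hgfin]
        simp
        rfl
      have hnorm' : ‖opRep π g' ξ‖ ≤ 1 := by
        rw [hw', norm_smul, Complex.norm_real, Real.norm_eq_abs, abs_of_nonneg (by positivity)]
        rw [inv_mul_cancel₀ (ne_of_gt hw0)]
      have hkey := key g' hg' hnorm'
      rw [hw', map_smul, norm_smul, Complex.norm_real, Real.norm_eq_abs,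
        abs_of_nonneg (by positivity)] at hkey
      calc ‖T w‖ = ‖w‖ * (‖w‖⁻¹ * ‖T w‖) := by
            field_simp
          _ ≤ ‖w‖ * L := mul_le_mul_of_nonneg_left hkey (le_of_lt hw0)
          _ = L * ‖w‖ := mul_comm _ _
  have hclosed : IsClosed {w : H | ‖T w‖ ≤ L * ‖w‖} :=
    isClosed_le (T.continuous.norm) (continuous_const.mul continuous_norm)
  have hall : ∀ w : H, ‖T w‖ ≤ L * ‖w‖ := by
    intro w
    have hmem : w ∈ closure
        (Submodule.span ℂ (Set.range fun s => (π s : H →L[ℂ] H) ξ) : Set H) := hcyc w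
    exact closure_minimal hbound hclosed hmem
  exact T.opNorm_le_bound hL0 hall

end Aux

open scoped InnerProductSpace in
/-- if `π` is a unitary representation of a countable group `Γ`
with cyclic vector `ξ` whose matrix coefficient lies in `ℓ_p(Γ)` (`2 ≤ p < ∞`,
`1/p + 1/q = 1`), then `‖π(f)‖ ≤ liminf_n |(f^* * f)^{(*2n)}|_q^{1/(4n)}` for
every finitely supported `f`. -/
theorem norm_pi_le_liminf (Γ : Type*) [Group Γ] [Countable Γ]
    (H : Type*) [NormedAddCommGroup H] [InnerProductSpace ℂ H] [CompleteSpace H]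
    (π : Γ →* unitary (H →L[ℂ] H)) (ξ : H)
    (hcyc : Dense (Submodule.span ℂ (Set.range fun s => (π s : H →L[ℂ] H) ξ) : Set H))
    (p q : ℝ) (hp1 : 2 ≤ p) (hpq : 1 / p + 1 / q = 1)
    (hcoef : Summable fun s : Γ => ‖(⟪ξ, (π s : H →L[ℂ] H) ξ⟫_ℂ : ℂ)‖ ^ p)
    (f : Γ → ℂ) (hf : (Function.support f).Finite) :
    ‖∑ᶠ s : Γ, f s • (π s : H →L[ℂ] H)‖ ≤
      Filter.atTop.liminf (fun n : ℕ =>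
        (lqNorm q (convPow (conv (fstar f) f) (2 * n))) ^ (1 / (4 * (n : ℝ)))) :=
  norm_pi_le_liminf_aux Γ H π ξ hcyc p q hp1 hpq hcoef f hf
end
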